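/- arXiv:2508.06770 — 4 statements merged into one kernel-verified Lean document; each statement's English description precedes it below -/
import Mathlib

section
/- For every integer n ≥ 1, every partition λ ⊢ n and every permutation σ ∈ S_n, the character satisfies |ch^λ(σ)| ≤ 2^n · δ(λ)^{cyc(σ)}. -/
open scoped BigOperators

namespace ThickHookPaper

/-- The diagonal length `δ(λ)` of a Young diagram: the number of diagonal boxes `(i,i)` in `λ`. -/
def diagLen (l : YoungDiagram) : ℕ := (l.cells.filter (fun u => u.1 = u.2)).card

/-- The maximal hook length `s(λ) = λ₁ + λ₁' - 1` of a Young diagram. -/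
def maxHook (l : YoungDiagram) : ℕ := l.rowLen 0 + l.colLen 0 - 1

/-- The hook length of the box `u = (i, j)` in `λ`. -/
def hook (l : YoungDiagram) (u : ℕ × ℕ) : ℕ :=
  (l.rowLen u.1 - u.2) + (l.colLen u.2 - u.1) - 1

/-- The number of standard tableaux of the skew shape `λ \ μ`, defined as the number of
saturated chains of Young diagrams from `μ` to `λ` (each step adding exactly one box). -/
noncomputable def skewSYT (μ l : YoungDiagram) : ℕ :=
  Nat.card {f : Fin (l.card - μ.card + 1) → YoungDiagram //
    f 0 = μ ∧ f (Fin.last _) = l ∧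
    ∀ i : Fin (l.card - μ.card),
      f i.castSucc ≤ f i.succ ∧ (f i.succ).card = (f i.castSucc).card + 1}

/-- The number of standard Young tableaux of shape `λ`, i.e. the dimension `d_λ`. -/
noncomputable def dim (l : YoungDiagram) : ℕ := skewSYT ⊥ l

/-! ### Ribbons and the Murnaghan--Nakayama character -/

/-- Two boxes are adjacent if they share an edge. -/
def Adj (u v : ℕ × ℕ) : Prop :=
  (u.1 = v.1 ∧ (u.2 + 1 = v.2 ∨ v.2 + 1 = u.2)) ∨
    (u.2 = v.2 ∧ (u.1 + 1 = v.1 ∨ v.1 + 1 = u.1))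

/-- A finite set of boxes is connected if any two of its boxes are linked by a path of
adjacent boxes inside the set. -/
def ConnectedCells (c : Finset (ℕ × ℕ)) : Prop :=
  ∀ u ∈ c, ∀ v ∈ c, Relation.ReflTransGen (fun x y => x ∈ c ∧ y ∈ c ∧ Adj x y) u v

/-- A set of boxes contains no `2 × 2` square. -/
def No2x2 (c : Finset (ℕ × ℕ)) : Prop :=
  ∀ i j : ℕ, ¬ ((i, j) ∈ c ∧ (i + 1, j) ∈ c ∧ (i, j + 1) ∈ c ∧ (i + 1, j + 1) ∈ c)

/-- `IsRibbon μ l` : the skew diagram `l \ μ` is a ribbon (nonempty, connected, no 2×2 square). -/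
def IsRibbon (μ l : YoungDiagram) : Prop :=
  μ ≤ l ∧ (l.cells \ μ.cells).Nonempty ∧ ConnectedCells (l.cells \ μ.cells) ∧
    No2x2 (l.cells \ μ.cells)

/-- The height of a set of boxes: the difference between the largest and smallest
row indices occurring in it. -/
noncomputable def cellsHeight (c : Finset (ℕ × ℕ)) : ℕ :=
  c.sup Prod.fst - sInf (Prod.fst '' (c : Set (ℕ × ℕ)))

/-- `IsRibbonTableau l α f` : `f` is a ribbon tableau of shape `l` and weight `α`, i.e. a
chain `⊥ = f 0 ⊆ f 1 ⊆ ... ⊆ f N = l` where each successive skew diagram is a ribbon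
with `α i` boxes. -/
def IsRibbonTableau (l : YoungDiagram) (α : List ℕ) (f : Fin (α.length + 1) → YoungDiagram) :
    Prop :=
  f 0 = ⊥ ∧ f (Fin.last _) = l ∧
  ∀ i : Fin α.length,
    IsRibbon (f i.castSucc) (f i.succ) ∧
      ((f i.succ).cells \ (f i.castSucc).cells).card = α.get i

/-- The total height of a ribbon tableau: the sum of the heights of its ribbons. -/
noncomputable def tabHeight (N : ℕ) (f : Fin (N + 1) → YoungDiagram) : ℕ :=
  ∑ i : Fin N, cellsHeight ((f i.succ).cells \ (f i.castSucc).cells)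

/-- The Murnaghan--Nakayama alternating sum over ribbon tableaux of shape `l` and weight `α`. -/
noncomputable def charMN (l : YoungDiagram) (α : List ℕ) : ℤ :=
  ∑ᶠ f ∈ {f : Fin (α.length + 1) → YoungDiagram | IsRibbonTableau l α f},
    (-1 : ℤ) ^ tabHeight α.length f

/-- The cycle type of a permutation including fixed points (as parts equal to `1`). -/
def fullCycleType {n : ℕ} (σ : Equiv.Perm (Fin n)) : Multiset ℕ :=
  σ.cycleType + Multiset.replicate (n - σ.support.card) 1

/-- The character `ch^λ(σ)` of the irreducible representation of `S_n` indexed by `λ ⊢ n`,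
defined via the Murnaghan--Nakayama rule. -/
noncomputable def charPerm (l : YoungDiagram) {n : ℕ} (σ : Equiv.Perm (Fin n)) : ℤ :=
  charMN l (fullCycleType σ).toList

/-- The total number of cycles of `σ`, fixed points counted as 1-cycles. -/
def cyc {n : ℕ} (σ : Equiv.Perm (Fin n)) : ℕ := Multiset.card (fullCycleType σ)

/-- `|σ|`: the minimal number of transpositions whose product is `σ`, which equals
`n` minus the number of cycles of `σ` (fixed points included). -/
def transLen {n : ℕ} (σ : Equiv.Perm (Fin n)) : ℕ := n - cyc σ

/-! ### Excited diagrams -/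

/-- The upper-right square of a box. -/
def URS (u : ℕ × ℕ) : Finset (ℕ × ℕ) :=
  {u, (u.1 + 1, u.2), (u.1, u.2 + 1), (u.1 + 1, u.2 + 1)}

/-- One simple excitation step: an excitable box of `E` is moved diagonally up-right. -/
def ExciteStep (l : YoungDiagram) (E E' : Finset (ℕ × ℕ)) : Prop :=
  ∃ u ∈ E, URS u ⊆ l.cells ∧ E ∩ URS u = {u} ∧
    E' = insert (u.1 + 1, u.2 + 1) (E.erase u)

/-- The set `𝓔(λ, μ)` of excited diagrams of `μ` in `λ`. -/
def Excited (l μ : YoungDiagram) : Set (Finset (ℕ × ℕ)) :=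
  {E | Relation.ReflTransGen (ExciteStep l) μ.cells E}

/-- The excited sum `S(λ, μ) = Σ_{E ∈ 𝓔(λ,μ)} Π_{u ∈ E} H(λ, u)`. -/
noncomputable def excitedSum (l μ : YoungDiagram) : ℕ :=
  ∑ᶠ E ∈ Excited l μ, ∏ u ∈ E, hook l u

/-! ### Rectangles, rows -/

/-- The rectangular Young diagram `[a^b]` with `b` rows of length `a`. -/
def rect (a b : ℕ) : YoungDiagram :=
  ⟨Finset.range b ×ˢ Finset.range a, by
    rintro ⟨i, j⟩ ⟨i', j'⟩ ⟨h1, h2⟩ hu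
    simp only [Finset.coe_product, Set.mem_prod, Finset.mem_coe, Finset.mem_range] at *
    exact ⟨lt_of_le_of_lt h1 hu.1, lt_of_le_of_lt h2 hu.2⟩⟩

/-- The one-row Young diagram `[ℓ]`. -/
def rowDiagram (ℓ : ℕ) : YoungDiagram := rect ℓ 1

/-! ### Thick hook decompositions -/

/-- The boxes of `λ` whose diagonal index `min i j` lies in `[lo, hi)`: this is the thick hook
`λ^{(lo+1) → hi}` in the (1-indexed) notation of the paper. -/
def thickHookCells (l : YoungDiagram) (lo hi : ℕ) : Finset (ℕ × ℕ) :=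
  l.cells.filter (fun u => lo ≤ min u.1 u.2 ∧ min u.1 u.2 < hi)

/-- An `(a, b)` thick hook decomposition of `λ`: diagonal indices
`0 = i_0 < i_1 < ... < i_p = δ(λ)` such that each thick hook
`T_j = λ^{(i_{j-1}+1) → i_j}` has between `a` and `b` boxes. -/
structure ThickHookDecomp (l : YoungDiagram) (a b : ℝ) where
  p : ℕ
  p_pos : 0 < p
  idx : ℕ → ℕ
  idx_zero : idx 0 = 0
  idx_last : idx p = diagLen l
  idx_strictMono : ∀ j < p, idx j < idx (j + 1)
  size_lb : ∀ j < p, a ≤ ((thickHookCells l (idx j) (idx (j + 1))).card : ℝ)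
  size_ub : ∀ j < p, ((thickHookCells l (idx j) (idx (j + 1))).card : ℝ) ≤ b

/-- The corners of a Young diagram: boxes `u ∈ λ` such that neither the box to the right
nor the box above (in the French convention: the next box in the row and in the column)
belongs to `λ`. -/
def corners (l : YoungDiagram) : Finset (ℕ × ℕ) :=
  l.cells.filter (fun u => (u.1, u.2 + 1) ∉ l ∧ (u.1 + 1, u.2) ∉ l)

/-! By the Murnaghan–Nakayama rule, `|ch^λ(σ)|` is at most the number of ribbon tableaux of
shape `λ` whose ribbons have the cycle lengths `t₁, …, t_k` of `σ` as sizes. A ribbon of size `t`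
added to `μ` meets `t` consecutive diagonals once each, so it is determined by `μ` and its least
content `d`. If all its contents are nonnegative, `d` is fixed by its last row, one of the first
`δ` rows; if all are negative, by its last column, one of the first `δ` columns; otherwise
`-(t - 1) ≤ d ≤ -1`. Hence each step of a tableau has at most `2δ + t - 1 ≤ 2^t δ` choices, and
there are at most `∏ 2^{tᵢ} δ = 2^n δ^{cyc σ}` tableaux. -/

open Finset

theorem encard_le_prod_of_succ_mem {β : Type*} {N : ℕ} (S : Set (Fin (N + 1) → β)) (b : β)
    (next : Fin N → β → Set β) (m : Fin N → ℕ) (hnext : ∀ i x, (next i x).encard ≤ m i)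
    (hzero : ∀ f ∈ S, f 0 = b) (hsucc : ∀ f ∈ S, ∀ i, f i.succ ∈ next i (f i.castSucc)) :
    S.encard ≤ ((∏ i, m i : ℕ) : ℕ∞) := by
  have hcode : ∀ i x, ∃ c : β → ℕ,
      next i x ⊆ c ⁻¹' {k | k < m i} ∧ (next i x).InjOn c := fun i x =>
    (Set.finite_of_encard_le_coe (hnext i x)).exists_injOn_of_encard_le
      (by rw [Set.Nat.encard_range]; exact hnext i x)
  choose c hc_maps hc_inj using hcode
  let Φ : (Fin (N + 1) → β) → (Fin N → ℕ) := fun f i => c i (f i.castSucc) (f i.succ)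
  have hΦ_maps : Set.MapsTo Φ S (Set.univ.pi fun i => {k | k < m i}) :=
    fun f hf i _ => hc_maps i _ (hsucc f hf i)
  have hΦ_inj : Set.InjOn Φ S := by
    intro f hf g hg hfg
    funext j
    induction j using Fin.induction with
    | zero => rw [hzero f hf, hzero g hg]
    | succ i ih =>
      refine hc_inj i (f i.castSucc) (hsucc f hf i) (ih ▸ hsucc g hg i) ?_
      simpa [Φ, ih] using congrFun hfg i
  calc S.encard ≤ _ := Set.encard_le_encard_of_injOn hΦ_maps hΦ_inj
    _ = ((∏ i, m i : ℕ) : ℕ∞) := by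
        simp only [Set.encard_pi_eq_prod_encard, Set.Nat.encard_range, Nat.cast_prod]

theorem abs_finsum_mem_neg_one_pow_le_ncard {α : Type*} {S : Set α} (hS : S.Finite) (g : α → ℕ) :
    |∑ᶠ x ∈ S, (-1 : ℤ) ^ g x| ≤ S.ncard := by
  rw [finsum_mem_eq_finite_toFinset_sum _ hS, Set.ncard_eq_toFinset_card S hS]
  calc |∑ x ∈ hS.toFinset, (-1 : ℤ) ^ g x| ≤ ∑ x ∈ hS.toFinset, |(-1 : ℤ) ^ g x| :=
        Finset.abs_sum_le_sum_abs _ _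
    _ = hS.toFinset.card := by simp

def content (u : ℕ × ℕ) : ℤ := u.2 - u.1

theorem Adj.content_eq {u v : ℕ × ℕ} (h : Adj u v) :
    content v = content u + 1 ∨ content v = content u - 1 := by
  obtain ⟨u1, u2⟩ := u
  obtain ⟨v1, v2⟩ := v
  simp only [Adj, content] at *
  omega

theorem ConnectedCells.exists_content_eq {s : Finset (ℕ × ℕ)} (hs : ConnectedCells s)
    {u v : ℕ × ℕ} (hu : u ∈ s) (hv : v ∈ s) {d : ℤ} (hud : content u ≤ d)
    (hdv : d ≤ content v) : ∃ w ∈ s, content w = d := by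
  induction hs u hu v hv with
  | refl => exact ⟨u, hu, le_antisymm hud hdv⟩
  | @tail w w' _ hstep ih =>
    by_cases hw : d ≤ content w
    · exact ih hstep.1 hw
    · rcases hstep.2.2.content_eq with h | h
      · exact ⟨w', hstep.2.1, by omega⟩
      · omega

section Skew

variable {μ ν : YoungDiagram}

theorem mem_skew_iff {u : ℕ × ℕ} : u ∈ ν.cells \ μ.cells ↔ u ∈ ν ∧ u ∉ μ := by
  simp only [mem_sdiff, YoungDiagram.mem_cells]

theorem mem_skew_of_le_of_le {u v w : ℕ × ℕ} (hu : u ∈ ν.cells \ μ.cells)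
    (hv : v ∈ ν.cells \ μ.cells) (huw : u ≤ w) (hwv : w ≤ v) : w ∈ ν.cells \ μ.cells :=
  mem_skew_iff.2 ⟨ν.isLowerSet hwv (mem_skew_iff.1 hv).1,
    fun hw => (mem_skew_iff.1 hu).2 (μ.isLowerSet huw hw)⟩

theorem content_injOn_of_no2x2 (h : No2x2 (ν.cells \ μ.cells)) :
    Set.InjOn content ↑(ν.cells \ μ.cells) := by
  suffices key : ∀ u ∈ ν.cells \ μ.cells, ∀ v ∈ ν.cells \ μ.cells,
      content u = content v → u.1 < v.1 → False by
    intro u hu v hv huv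
    rcases lt_trichotomy u.1 v.1 with hlt | heq | hgt
    · exact (key u hu v hv huv hlt).elim
    · exact Prod.ext heq (by simp only [content] at huv; omega)
    · exact (key v hv u hu huv.symm hgt).elim
  rintro ⟨a, b⟩ hu ⟨a', b'⟩ hv huv hlt
  simp only [content] at huv hlt
  have hbox : ∀ i j, a ≤ i → i ≤ a' → b ≤ j → j ≤ b' → (i, j) ∈ ν.cells \ μ.cells :=
    fun i j hi hi' hj hj' =>
      mem_skew_of_le_of_le hu hv (Prod.mk_le_mk.2 ⟨hi, hj⟩) (Prod.mk_le_mk.2 ⟨hi', hj'⟩)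
  exact h a b ⟨hu, hbox _ _ (by omega) (by omega) le_rfl (by omega),
    hbox _ _ le_rfl (by omega) (by omega) (by omega),
    hbox _ _ (by omega) (by omega) (by omega) (by omega)⟩

theorem skew_subset_of_image_content_subset {ν' : YoungDiagram}
    (hinj : Set.InjOn content ↑(ν.cells \ μ.cells))
    (h : (ν.cells \ μ.cells).image content ⊆ (ν'.cells \ μ.cells).image content) :
    ν.cells \ μ.cells ⊆ ν'.cells \ μ.cells := by
  intro u hu
  obtain ⟨v, hv, hvu⟩ := mem_image.1 (h (mem_image_of_mem content hu))
  have hcomp : u ≤ v ∨ v ≤ u := by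
    obtain ⟨a, b⟩ := u
    obtain ⟨c, d⟩ := v
    simp only [content] at hvu
    rcases le_total a c with hac | hca
    · exact .inl (Prod.mk_le_mk.2 ⟨hac, by omega⟩)
    · exact .inr (Prod.mk_le_mk.2 ⟨hca, by omega⟩)
  rcases hcomp with huv | hvu'
  · exact mem_skew_iff.2 ⟨ν'.isLowerSet huv (mem_skew_iff.1 hv).1, (mem_skew_iff.1 hu).2⟩
  · have hv' : v ∈ ν.cells \ μ.cells :=
      mem_skew_iff.2 ⟨ν.isLowerSet hvu' (mem_skew_iff.1 hu).1, (mem_skew_iff.1 hv).2⟩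
    rwa [hinj hv' hu hvu] at hv

/-- The content of the first box `(x, μ.rowLen x)` of the last row `x` met by `ν / μ`. -/
def skewMinContent (μ ν : YoungDiagram) : ℤ :=
  μ.rowLen ((ν.cells \ μ.cells).sup Prod.fst) - (ν.cells \ μ.cells).sup Prod.fst

/-- The content of the first box `(μ.colLen y, y)` of the last column `y` met by `ν / μ`. -/
def skewMaxContent (μ ν : YoungDiagram) : ℤ :=
  (ν.cells \ μ.cells).sup Prod.snd - μ.colLen ((ν.cells \ μ.cells).sup Prod.snd)

theorem rowLen_le_of_mem_skew {u : ℕ × ℕ} (hu : u ∈ ν.cells \ μ.cells) : μ.rowLen u.1 ≤ u.2 :=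
  not_lt.1 fun h => (mem_skew_iff.1 hu).2 (YoungDiagram.mem_iff_lt_rowLen.2 h)

theorem colLen_le_of_mem_skew {u : ℕ × ℕ} (hu : u ∈ ν.cells \ μ.cells) : μ.colLen u.2 ≤ u.1 :=
  not_lt.1 fun h => (mem_skew_iff.1 hu).2 (YoungDiagram.mem_iff_lt_colLen.2 h)

theorem mem_skew_lastRow (hne : (ν.cells \ μ.cells).Nonempty) :
    ((ν.cells \ μ.cells).sup Prod.fst, μ.rowLen ((ν.cells \ μ.cells).sup Prod.fst)) ∈
      ν.cells \ μ.cells := by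
  obtain ⟨u, hu, hx⟩ := exists_mem_eq_sup _ hne Prod.fst
  rw [hx]
  refine mem_skew_iff.2 ⟨ν.up_left_mem le_rfl (rowLen_le_of_mem_skew hu) (mem_skew_iff.1 hu).1, ?_⟩
  rw [YoungDiagram.mem_iff_lt_rowLen]
  exact lt_irrefl _

theorem mem_skew_lastCol (hne : (ν.cells \ μ.cells).Nonempty) :
    (μ.colLen ((ν.cells \ μ.cells).sup Prod.snd), (ν.cells \ μ.cells).sup Prod.snd) ∈
      ν.cells \ μ.cells := by
  obtain ⟨u, hu, hy⟩ := exists_mem_eq_sup _ hne Prod.snd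
  rw [hy]
  refine mem_skew_iff.2 ⟨ν.up_left_mem (colLen_le_of_mem_skew hu) le_rfl (mem_skew_iff.1 hu).1, ?_⟩
  rw [YoungDiagram.mem_iff_lt_colLen]
  exact lt_irrefl _

theorem skewMinContent_le_content {u : ℕ × ℕ} (hu : u ∈ ν.cells \ μ.cells) :
    skewMinContent μ ν ≤ content u := by
  have hx : u.1 ≤ (ν.cells \ μ.cells).sup Prod.fst := le_sup (f := Prod.fst) hu
  have := μ.rowLen_anti _ _ hx
  have := rowLen_le_of_mem_skew hu
  simp only [skewMinContent, content]
  omega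

theorem content_le_skewMaxContent {u : ℕ × ℕ} (hu : u ∈ ν.cells \ μ.cells) :
    content u ≤ skewMaxContent μ ν := by
  have hy : u.2 ≤ (ν.cells \ μ.cells).sup Prod.snd := le_sup (f := Prod.snd) hu
  have := μ.colLen_anti _ _ hy
  have := colLen_le_of_mem_skew hu
  simp only [skewMaxContent, content]
  omega

theorem image_content_eq_Icc_of_connected (hne : (ν.cells \ μ.cells).Nonempty)
    (hcon : ConnectedCells (ν.cells \ μ.cells)) :
    (ν.cells \ μ.cells).image content = Icc (skewMinContent μ ν) (skewMaxContent μ ν) := by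
  refine Subset.antisymm (fun d hd => ?_) (fun d hd => ?_)
  · obtain ⟨u, hu, rfl⟩ := mem_image.1 hd
    exact mem_Icc.2 ⟨skewMinContent_le_content hu, content_le_skewMaxContent hu⟩
  · obtain ⟨w, hw, rfl⟩ := hcon.exists_content_eq (mem_skew_lastRow hne) (mem_skew_lastCol hne)
      (d := d) (by simpa [content, skewMinContent] using (mem_Icc.1 hd).1)
      (by simpa [content, skewMaxContent] using (mem_Icc.1 hd).2)
    exact mem_image_of_mem content hw

theorem IsRibbon.skewMaxContent_eq (h : IsRibbon μ ν) :
    skewMaxContent μ ν = skewMinContent μ ν + (#(ν.cells \ μ.cells) - 1 : ℕ) := by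
  have hcard := card_image_of_injOn (content_injOn_of_no2x2 h.2.2.2)
  rw [image_content_eq_Icc_of_connected h.2.1 h.2.2.1, Int.card_Icc] at hcard
  have := h.2.1.card_pos
  omega

theorem IsRibbon.image_content (h : IsRibbon μ ν) :
    (ν.cells \ μ.cells).image content =
      Icc (skewMinContent μ ν) (skewMinContent μ ν + (#(ν.cells \ μ.cells) - 1 : ℕ)) := by
  rw [image_content_eq_Icc_of_connected h.2.1 h.2.2.1, h.skewMaxContent_eq]

theorem IsRibbon.eq_of_image_content_eq {ν' : YoungDiagram} (h : IsRibbon μ ν)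
    (h' : IsRibbon μ ν')
    (himage : (ν.cells \ μ.cells).image content = (ν'.cells \ μ.cells).image content) :
    ν = ν' := by
  have hskew : ν.cells \ μ.cells = ν'.cells \ μ.cells :=
    (skew_subset_of_image_content_subset (content_injOn_of_no2x2 h.2.2.2) himage.le).antisymm
      (skew_subset_of_image_content_subset (content_injOn_of_no2x2 h'.2.2.2) himage.ge)
  ext1
  rw [← union_sdiff_of_subset (YoungDiagram.cells_subset_iff.2 h.1),
    ← union_sdiff_of_subset (YoungDiagram.cells_subset_iff.2 h'.1), hskew]

end Skew

theorem lt_diagLen {l : YoungDiagram} {i : ℕ} (h : (i, i) ∈ l) : i < diagLen l := by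
  have hsub : (range (i + 1)).image (fun a => (a, a)) ⊆ l.cells.filter (fun u => u.1 = u.2) := by
    intro u hu
    obtain ⟨a, ha, rfl⟩ := mem_image.1 hu
    have ha : a ≤ i := Nat.lt_succ_iff.1 (mem_range.1 ha)
    exact mem_filter.2 ⟨l.up_left_mem ha ha h, rfl⟩
  have := card_le_card hsub
  rwa [card_image_of_injective _ fun a b hab => congrArg Prod.fst hab, card_range] at this

/-- The possible least contents of a ribbon of size `t` added to `μ` inside a diagram with `δ`
diagonal boxes: the ribbon has only nonnegative contents and starts in a row `i < δ`, only
negative contents and ends in a column `j < δ`, or contents of both signs. -/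
noncomputable def ribbonStarts (μ : YoungDiagram) (δ t : ℕ) : Finset ℤ :=
  (range δ).image (fun i : ℕ => (μ.rowLen i : ℤ) - i) ∪
    (range δ).image (fun j : ℕ => (j : ℤ) - μ.colLen j - (t - 1 : ℕ)) ∪
      Icc (-(t - 1 : ℕ) : ℤ) (-1)

theorem card_ribbonStarts_le (μ : YoungDiagram) (δ t : ℕ) :
    #(ribbonStarts μ δ t) ≤ 2 * δ + (t - 1) := by
  unfold ribbonStarts
  grw [card_union_le, card_union_le, card_image_le, card_image_le, card_range, Int.card_Icc]
  omega

theorem IsRibbon.skewMinContent_mem_ribbonStarts {l μ ν : YoungDiagram} (h : IsRibbon μ ν)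
    (hl : ν ≤ l) : skewMinContent μ ν ∈ ribbonStarts μ (diagLen l) #(ν.cells \ μ.cells) := by
  have hmax := h.skewMaxContent_eq
  unfold skewMaxContent at hmax
  unfold skewMinContent at hmax ⊢
  set x := (ν.cells \ μ.cells).sup Prod.fst
  set y := (ν.cells \ μ.cells).sup Prod.snd
  simp only [ribbonStarts, mem_union, mem_image, mem_range, mem_Icc]
  by_cases hx : x ≤ μ.rowLen x
  · have hxx : (x, x) ∈ l :=
      hl (ν.up_left_mem le_rfl hx (mem_skew_iff.1 (mem_skew_lastRow h.2.1)).1)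
    exact .inl (.inl ⟨x, lt_diagLen hxx, rfl⟩)
  by_cases hy : y < μ.colLen y
  · have hyy : (y, y) ∈ l :=
      hl (ν.up_left_mem hy.le le_rfl (mem_skew_iff.1 (mem_skew_lastCol h.2.1)).1)
    exact .inl (.inr ⟨y, lt_diagLen hyy, by omega⟩)
  exact .inr ⟨by omega, by omega⟩

theorem encard_ribbonExtensions_le (l μ : YoungDiagram) (t : ℕ) :
    {ν | IsRibbon μ ν ∧ ν ≤ l ∧ #(ν.cells \ μ.cells) = t}.encard ≤
      ((2 * diagLen l + (t - 1) : ℕ) : ℕ∞) := by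
  let starts := ribbonStarts μ (diagLen l) t
  have hmaps : Set.MapsTo (fun ν : YoungDiagram => (ν.cells \ μ.cells).image content)
      {ν | IsRibbon μ ν ∧ ν ≤ l ∧ #(ν.cells \ μ.cells) = t}
      ↑(starts.image fun d : ℤ => Icc d (d + (t - 1 : ℕ))) := by
    rintro ν ⟨hr, hl, rfl⟩
    exact mem_image.2 ⟨_, hr.skewMinContent_mem_ribbonStarts hl, hr.image_content.symm⟩
  have hinj : Set.InjOn (fun ν : YoungDiagram => (ν.cells \ μ.cells).image content)
      {ν | IsRibbon μ ν ∧ ν ≤ l ∧ #(ν.cells \ μ.cells) = t} :=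
    fun ν hν ν' hν' h => hν.1.eq_of_image_content_eq hν'.1 h
  calc _ ≤ _ := Set.encard_le_encard_of_injOn hmaps hinj
    _ = (#(starts.image fun d : ℤ => Icc d (d + (t - 1 : ℕ))) : ℕ∞) :=
        Set.encard_coe_eq_coe_finsetCard _
    _ ≤ _ := by
        gcongr
        exact card_image_le.trans (card_ribbonStarts_le μ (diagLen l) t)

theorem IsRibbonTableau.le_shape {l : YoungDiagram} {α : List ℕ}
    {f : Fin (α.length + 1) → YoungDiagram} (hf : IsRibbonTableau l α f) (j : Fin (α.length + 1)) :
    f j ≤ l :=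
  hf.2.1 ▸ Fin.monotone_iff_le_succ.2 (fun i => (hf.2.2 i).1.1) (Fin.le_last j)

theorem encard_ribbonTableaux_le (l : YoungDiagram) (α : List ℕ) :
    {f | IsRibbonTableau l α f}.encard ≤
      ((∏ i : Fin α.length, (2 * diagLen l + (α.get i - 1)) : ℕ) : ℕ∞) :=
  encard_le_prod_of_succ_mem _ ⊥
    (fun i μ => {ν | IsRibbon μ ν ∧ ν ≤ l ∧ #(ν.cells \ μ.cells) = α.get i}) _
    (fun _ μ => encard_ribbonExtensions_le l μ _) (fun _ hf => hf.1)
    (fun _ hf i => ⟨(hf.2.2 i).1, hf.le_shape i.succ, (hf.2.2 i).2⟩)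

theorem abs_charMN_le (l : YoungDiagram) (α : List ℕ) :
    |charMN l α| ≤ ∏ i : Fin α.length, (2 * diagLen l + (α.get i - 1) : ℕ) := by
  obtain ⟨hfin, hcard⟩ := Set.encard_le_coe_iff_finite_ncard_le.1 (encard_ribbonTableaux_le l α)
  exact_mod_cast (abs_finsum_mem_neg_one_pow_le_ncard hfin _).trans (by exact_mod_cast hcard)

theorem two_mul_add_sub_one_le {δ t : ℕ} (hδ : 1 ≤ δ) (ht : 1 ≤ t) :
    2 * δ + (t - 1) ≤ 2 ^ t * δ := by
  obtain ⟨s, rfl⟩ := Nat.exists_eq_add_of_le' ht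
  have hpow : s + 2 ≤ 2 ^ (s + 1) := Nat.lt_two_pow_self
  rw [Nat.add_sub_cancel]
  nlinarith

theorem prod_two_mul_add_sub_one_le {δ : ℕ} (hδ : 1 ≤ δ) (α : List ℕ) (hα : ∀ a ∈ α, 1 ≤ a) :
    ∏ i : Fin α.length, (2 * δ + (α.get i - 1)) ≤ 2 ^ α.sum * δ ^ α.length :=
  calc ∏ i : Fin α.length, (2 * δ + (α.get i - 1))
      ≤ ∏ i : Fin α.length, 2 ^ α.get i * δ :=
        prod_le_prod' fun i _ => two_mul_add_sub_one_le hδ (hα _ (α.get_mem i))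
    _ = 2 ^ α.sum * δ ^ α.length := by
        rw [prod_mul_distrib, prod_pow_eq_pow_sum, ← Fin.sum_univ_getElem, prod_const, card_univ,
          Fintype.card_fin]
        rfl

theorem sum_fullCycleType {n : ℕ} (σ : Equiv.Perm (Fin n)) : (fullCycleType σ).sum = n := by
  have := σ.support.card_le_univ
  rw [fullCycleType, Multiset.sum_add, Equiv.Perm.sum_cycleType, Multiset.sum_replicate,
    smul_eq_mul, mul_one, Fintype.card_fin] at *
  omega

theorem one_le_of_mem_fullCycleType {n : ℕ} {σ : Equiv.Perm (Fin n)} {a : ℕ}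
    (ha : a ∈ fullCycleType σ) : 1 ≤ a := by
  rcases Multiset.mem_add.1 ha with h | h
  · exact (Equiv.Perm.one_lt_of_mem_cycleType h).le
  · exact (Multiset.eq_of_mem_replicate h).ge

theorem one_le_diagLen {l : YoungDiagram} (h : 0 < l.card) : 1 ≤ diagLen l := by
  obtain ⟨u, hu⟩ := card_pos.1 h
  exact lt_diagLen (l.up_left_mem (Nat.zero_le u.1) (Nat.zero_le u.2) hu)

/-- character bound via diagonal length and number of cycles
(Theorem 4 of the paper). -/
theorem character_bound_diag_cyc (n : ℕ) (hn : 1 ≤ n) (l : YoungDiagram) (hl : l.card = n)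
    (σ : Equiv.Perm (Fin n)) :
    |(charPerm l σ : ℝ)| ≤ 2 ^ n * (diagLen l : ℝ) ^ cyc σ := by
  set α := (fullCycleType σ).toList
  have hsum : α.sum = n := by rw [Multiset.sum_toList, sum_fullCycleType]
  have hlen : α.length = cyc σ := Multiset.length_toList _
  have hbound : |charPerm l σ| ≤ 2 ^ n * (diagLen l : ℤ) ^ cyc σ := by
    calc |charMN l α| ≤ ((∏ i : Fin α.length, (2 * diagLen l + (α.get i - 1)) : ℕ) : ℤ) :=
          abs_charMN_le l α
      _ ≤ ((2 ^ α.sum * diagLen l ^ α.length : ℕ) : ℤ) := by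
          gcongr
          exact prod_two_mul_add_sub_one_le (one_le_diagLen (hl ▸ hn))
            α fun a ha => one_le_of_mem_fullCycleType (Multiset.mem_toList.1 ha)
      _ = 2 ^ n * (diagLen l : ℤ) ^ cyc σ := by push_cast [hsum, hlen]; rfl
  rw [← Int.cast_abs]
  exact_mod_cast hbound

end ThickHookPaper
end

section
/- Let λ be a nonempty Young diagram with n boxes and let a be a real number with s(λ) ≤ a ≤ n. Then there exists an (a, 4a) thick hook decomposition of λ. -/
open scoped BigOperators

namespace ThickHookPaper

/- Group the boxes of `λ` by the diagonal hook `λ^{i+1}` containing them (the boxes with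
`min u.1 u.2 = i`). Translating `λ^{i+1}` by `(-i, -i)` embeds it into the outer hook `λ^1`, so
every diagonal hook has at most `s(λ) ≤ a` boxes, while all of them together have `n ≥ a` boxes.
Thick hooks are unions of consecutive diagonal hooks, so it remains to cut a sequence of terms
`≤ a` with total `≥ a` into consecutive blocks with sums in `[a, 4a]`: while the total exceeds
`4a`, split off the shortest final block with sum `≥ a`; its sum is `< 2a`, so more than `2a`
remains for the other blocks. -/

section GreedyPartition

open Finset

theorem exists_Ico_partition_sum_mem_Icc {f : ℕ → ℝ} {a : ℝ} (ha : 0 < a) (hf : ∀ i, f i ≤ a)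
    (lo hi : ℕ) (hsum : a ≤ ∑ i ∈ Ico lo hi, f i) :
    ∃ p, 0 < p ∧ ∃ idx : ℕ → ℕ, idx 0 = lo ∧ idx p = hi ∧
      ∀ j < p, idx j < idx (j + 1) ∧ ∑ i ∈ Ico (idx j) (idx (j + 1)), f i ∈ Set.Icc a (4 * a) := by
  induction hi using Nat.strong_induction_on with
  | _ hi ih =>
  have hlo : lo < hi := by
    by_contra! h
    rw [Ico_eq_empty_of_le h, sum_empty] at hsum
    linarith
  by_cases hsmall : ∑ i ∈ Ico lo hi, f i ≤ 4 * a
  · refine ⟨1, one_pos, fun j => if j = 0 then lo else hi, rfl, rfl, fun j hj => ?_⟩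
    obtain rfl : j = 0 := by omega
    exact ⟨hlo, hsum, hsmall⟩
  set k := Nat.findGreatest (fun k => a ≤ ∑ i ∈ Ico k hi, f i) hi
  have hk_sum : a ≤ ∑ i ∈ Ico k hi, f i :=
    Nat.findGreatest_spec (P := fun k => a ≤ ∑ i ∈ Ico k hi, f i) hlo.le hsum
  have hlo_k : lo ≤ k := Nat.le_findGreatest hlo.le hsum
  have hk_hi : k < hi := by
    refine (Nat.findGreatest_le hi).lt_of_ne fun h => ?_
    change k = hi at h
    rw [h, Ico_self, sum_empty] at hk_sum
    linarith
  have hk_succ : ∑ i ∈ Ico (k + 1) hi, f i < a :=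
    not_le.mp (Nat.findGreatest_is_greatest (Nat.lt_succ_self k) hk_hi)
  have hk_le : ∑ i ∈ Ico k hi, f i ≤ 2 * a := by
    rw [sum_eq_sum_Ico_succ_bot hk_hi]
    linarith [hf k]
  have hsplit := sum_Ico_consecutive f hlo_k hk_hi.le
  obtain ⟨p, hp, idx, h0, hp_idx, hblocks⟩ := ih k hk_hi (by linarith)
  refine ⟨p + 1, p.succ_pos, fun j => if j ≤ p then idx j else hi, by simpa using h0,
    by simp, fun j hj => ?_⟩
  rcases (Nat.lt_succ_iff.mp hj).lt_or_eq with hj | rfl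
  · simpa [hj.le, Nat.succ_le_of_lt hj] using hblocks j hj
  · simp only [le_refl, if_true, Nat.not_succ_le_self, if_false, hp_idx]
    exact ⟨hk_hi, hk_sum, by linarith⟩

end GreedyPartition

/-- The diagonal hook `λ^{i+1}` of the paper: diagonal boxes are `0`-indexed here. -/
def diagHook (l : YoungDiagram) (i : ℕ) : Finset (ℕ × ℕ) :=
  l.cells.filter (fun u => min u.1 u.2 = i)

section DiagonalHooks

variable (l : YoungDiagram)

open Finset

theorem lt_diagLen_of_mem {i : ℕ} (h : (i, i) ∈ l) : i < diagLen l := by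
  have hsub : (range (i + 1)).image (fun j => (j, j)) ⊆ l.cells.filter (fun u => u.1 = u.2) := by
    intro u hu
    obtain ⟨j, hj, rfl⟩ := mem_image.mp hu
    have hji : j ≤ i := Nat.lt_succ_iff.mp (mem_range.mp hj)
    exact mem_filter.mpr ⟨l.up_left_mem hji hji h, rfl⟩
  calc i + 1 = #((range (i + 1)).image fun j => (j, j)) := by
        rw [card_image_of_injective _ fun j j' h => (Prod.mk.inj h).1, card_range]
    _ ≤ diagLen l := card_le_card hsub

theorem min_lt_diagLen {u : ℕ × ℕ} (hu : u ∈ l) : min u.1 u.2 < diagLen l :=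
  lt_diagLen_of_mem l (l.up_left_mem (min_le_left _ _) (min_le_right _ _) hu)

theorem thickHookCells_zero_diagLen : thickHookCells l 0 (diagLen l) = l.cells := by
  ext u
  simp only [thickHookCells, mem_filter, YoungDiagram.mem_cells, zero_le, true_and,
    and_iff_left_iff_imp]
  exact min_lt_diagLen l

theorem card_thickHookCells (lo hi : ℕ) :
    #(thickHookCells l lo hi) = ∑ i ∈ Ico lo hi, #(diagHook l i) := by
  rw [card_eq_sum_card_fiberwise (f := fun u => min u.1 u.2) (t := Ico lo hi)]
  · refine sum_congr rfl fun i hi => congrArg card ?_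
    ext u
    simp only [thickHookCells, diagHook, mem_filter, mem_Ico] at hi ⊢
    constructor
    · exact fun h => ⟨h.1.1, h.2⟩
    · rintro ⟨hu, rfl⟩
      exact ⟨⟨hu, hi⟩, rfl⟩
  · intro u hu
    simpa [thickHookCells] using (mem_filter.mp hu).2

theorem card_diagHook_le_card_diagHook_zero (i : ℕ) : #(diagHook l i) ≤ #(diagHook l 0) := by
  refine card_le_card_of_injOn (fun u => (u.1 - i, u.2 - i)) (fun u hu => ?_) fun u hu v hv h => ?_
  · simp only [diagHook, coe_filter, Set.mem_ofPred_eq, YoungDiagram.mem_cells] at hu ⊢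
    exact ⟨l.up_left_mem (Nat.sub_le _ _) (Nat.sub_le _ _) hu.1, by omega⟩
  · simp only [diagHook, coe_filter, Set.mem_ofPred_eq, Prod.mk.injEq] at hu hv h
    ext <;> omega

theorem card_diagHook_zero (h : (0, 0) ∈ l) : #(diagHook l 0) = maxHook l := by
  have hunion : diagHook l 0 = l.row 0 ∪ l.col 0 := by
    ext u
    simp only [diagHook, mem_filter, mem_union, YoungDiagram.mem_row_iff,
      YoungDiagram.mem_col_iff, YoungDiagram.mem_cells, Nat.min_eq_zero_iff, and_or_left]
  have hinter : l.row 0 ∩ l.col 0 = {(0, 0)} := by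
    ext ⟨x, y⟩
    simp only [mem_inter, YoungDiagram.mem_row_iff, YoungDiagram.mem_col_iff, mem_singleton,
      Prod.mk.injEq]
    constructor
    · exact fun h => ⟨h.1.2, h.2.2⟩
    · rintro ⟨rfl, rfl⟩
      exact ⟨⟨h, rfl⟩, h, rfl⟩
  have := card_union_add_card_inter (l.row 0) (l.col 0)
  rw [← hunion, hinter, card_singleton, ← YoungDiagram.rowLen_eq_card,
    ← YoungDiagram.colLen_eq_card] at this
  unfold maxHook
  omega

end DiagonalHooks

/-- existence of `(a, 4a)` thick hook decompositions. -/
theorem thick_hook_decomp_exists (l : YoungDiagram) (hl : 1 ≤ l.card) (a : ℝ)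
    (ha1 : (maxHook l : ℝ) ≤ a) (ha2 : a ≤ (l.card : ℝ)) :
    Nonempty (ThickHookDecomp l a (4 * a)) := by
  obtain ⟨u, hu⟩ := Finset.card_pos.mp hl
  have h00 : (0, 0) ∈ l := l.up_left_mem (Nat.zero_le _) (Nat.zero_le _) hu
  have hhook (i : ℕ) : ((diagHook l i).card : ℝ) ≤ a := by
    refine le_trans ?_ ha1
    exact_mod_cast (card_diagHook_le_card_diagHook_zero l i).trans (card_diagHook_zero l h00).le
  have ha : 0 < a := by
    refine lt_of_lt_of_le ?_ ha1
    rw [← card_diagHook_zero l h00]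
    exact_mod_cast Finset.card_pos.mpr ⟨(0, 0), by simp [diagHook, h00]⟩
  have htotal : a ≤ ∑ i ∈ Finset.Ico 0 (diagLen l), ((diagHook l i).card : ℝ) := by
    rwa [← Nat.cast_sum, ← card_thickHookCells, thickHookCells_zero_diagLen]
  obtain ⟨p, hp, idx, h0, hp_idx, hblocks⟩ :=
    exists_Ico_partition_sum_mem_Icc ha hhook 0 (diagLen l) htotal
  have hcard (j : ℕ) : ((thickHookCells l (idx j) (idx (j + 1))).card : ℝ) =
      ∑ i ∈ Finset.Ico (idx j) (idx (j + 1)), ((diagHook l i).card : ℝ) := by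
    rw [card_thickHookCells, Nat.cast_sum]
  exact ⟨⟨p, hp, idx, h0, hp_idx, fun j hj => (hblocks j hj).1,
    fun j hj => hcard j ▸ (hblocks j hj).2.1, fun j hj => hcard j ▸ (hblocks j hj).2.2⟩⟩

end ThickHookPaper
end

section
/- Let λ be a Young diagram with n boxes, let a be a real number with s(λ) ≤ a ≤ n, and let 1 ≤ ℓ ≤ λ_1 be an integer. Then the excited sum satisfies S(λ, [ℓ]) ≤ C(ℓ + ⌊n/a⌋, ℓ) · (4a)^ℓ, where C(·,·) denotes a binomial coefficient. -/
open scoped BigOperators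

namespace ThickHookPaper

/-!
Box `k` of an excited diagram of `[ℓ]` sits at `(d k, d k + k)` for a monotone `d`, and its hook is
at most the diagonal hook `H(λ, (d k, d k))`. The diagonal hooks are disjoint, so they weigh at most
`n` in total, and each weighs at most `s(λ) ≤ a`. Cutting the diagonal into consecutive blocks by
`⌊(H(λ, (0,0)) + ⋯ + H(λ, (d - 1, d - 1))) / ⌈a⌉⌋` gives at most `⌊n / a⌋ + 1` blocks of weight
`< 2⌈a⌉ ≤ 4a` each. A monotone `d` visits a monotone sequence of blocks, of which there are
`(ℓ + ⌊n / a⌋).choose ℓ`, and inside fixed blocks the products of hooks sum to at most `(4a) ^ ℓ`.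
-/

open Finset

lemma hook_le_hook_diag (l : YoungDiagram) (d k : ℕ) : hook l (d, d + k) ≤ hook l (d, d) := by
  have := l.colLen_anti d (d + k) (Nat.le_add_right _ _)
  simp only [hook]
  omega

lemma hook_diag_le_maxHook (l : YoungDiagram) (d : ℕ) : hook l (d, d) ≤ maxHook l := by
  have := l.rowLen_anti 0 d (Nat.zero_le _)
  have := l.colLen_anti 0 d (Nat.zero_le _)
  simp only [hook, maxHook]
  omega

lemma hook_diag_le_card (l : YoungDiagram) (d : ℕ) :
    hook l (d, d) ≤ #{u ∈ l.cells | min u.1 u.2 = d} := by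
  set arm := {d} ×ˢ Ico d (l.rowLen d)
  set leg := Ico (d + 1) (l.colLen d) ×ˢ {d}
  have hdisj : Disjoint arm leg := by
    rw [disjoint_left]
    rintro ⟨i, j⟩ h h'
    simp only [arm, leg, mem_product, mem_Ico, mem_singleton] at h h'
    omega
  have hsub : arm ∪ leg ⊆ {u ∈ l.cells | min u.1 u.2 = d} := by
    rintro ⟨i, j⟩ h
    simp only [arm, leg, mem_union, mem_product, mem_Ico, mem_singleton] at h
    simp only [mem_filter, YoungDiagram.mem_cells]
    rcases h with ⟨rfl, hj⟩ | ⟨hi, rfl⟩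
    · exact ⟨YoungDiagram.mem_iff_lt_rowLen.2 hj.2, by omega⟩
    · exact ⟨YoungDiagram.mem_iff_lt_colLen.2 hi.2, by omega⟩
  calc hook l (d, d) ≤ #arm + #leg := by simp only [arm, leg, card_product]; simp [hook]; omega
    _ = #(arm ∪ leg) := (card_union_of_disjoint hdisj).symm
    _ ≤ _ := card_le_card hsub

lemma sum_hook_diag_le_card (l : YoungDiagram) (D : ℕ) :
    ∑ d ∈ range D, hook l (d, d) ≤ l.card :=
  calc ∑ d ∈ range D, hook l (d, d)
      ≤ ∑ d ∈ range D, #{u ∈ l.cells | min u.1 u.2 = d} :=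
        sum_le_sum fun d _ => hook_diag_le_card l d
    _ = #{u ∈ l.cells | min u.1 u.2 ∈ range D} := sum_card_fiberwise_eq_card_filter _ _ _
    _ ≤ l.card := card_filter_le _ _

section ExcitedRows

variable {ℓ : ℕ}

/-- The box `(0, k)` of `[ℓ]`, moved `d k` steps up its diagonal. -/
def shiftedRow (d : Fin ℓ → ℕ) : Finset (ℕ × ℕ) := univ.image fun k => (d k, d k + k)

def IsAdmissibleShift (l : YoungDiagram) (d : Fin ℓ → ℕ) : Prop :=
  Monotone d ∧ ∀ k, (d k, d k + k) ∈ l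

lemma shiftedRow_box_injective (d : Fin ℓ → ℕ) :
    Function.Injective fun k => (d k, d k + (k : ℕ)) := by
  intro i j h
  simp only [Prod.mk.injEq] at h
  exact Fin.ext (by omega)

lemma shiftedRow_injective : Function.Injective (shiftedRow (ℓ := ℓ)) := by
  intro d d' h
  funext k
  have hk : (d k, d k + k) ∈ shiftedRow d' := h ▸ mem_image_of_mem _ (mem_univ k)
  obtain ⟨j, -, hj⟩ := mem_image.1 hk
  simp only [Prod.mk.injEq] at hj
  have : j = k := Fin.ext (by omega)
  subst this
  exact hj.1.symm

lemma shiftedRow_zero : shiftedRow (0 : Fin ℓ → ℕ) = (rowDiagram ℓ).cells := by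
  ext ⟨i, j⟩
  simp only [shiftedRow, rowDiagram, rect, Pi.zero_apply, zero_add, mem_image, mem_univ,
    true_and, Prod.mk.injEq, mem_product, mem_range]
  constructor
  · rintro ⟨k, rfl, rfl⟩
    exact ⟨Nat.one_pos, k.isLt⟩
  · rintro ⟨hi, hj⟩
    exact ⟨⟨j, hj⟩, by omega, rfl⟩

lemma isAdmissibleShift_zero {l : YoungDiagram} (h : ℓ ≤ l.rowLen 0) :
    IsAdmissibleShift l (0 : Fin ℓ → ℕ) :=
  ⟨monotone_const, fun k => YoungDiagram.mem_iff_lt_rowLen.2 (by simp; omega)⟩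

/-- Exciting box `k` of a shifted row replaces `d k` by `d k + 1`. This keeps `d` monotone because
box `k + 1` cannot lie on the row of box `k`: it would be in the `URS` of box `k`. -/
lemma exists_isAdmissibleShift_of_exciteStep {l : YoungDiagram} {d : Fin ℓ → ℕ}
    {E' : Finset (ℕ × ℕ)} (hd : IsAdmissibleShift l d) (h : ExciteStep l (shiftedRow d) E') :
    ∃ d' : Fin ℓ → ℕ, IsAdmissibleShift l d' ∧ E' = shiftedRow d' := by
  obtain ⟨u, hu, hURS, hsingle, rfl⟩ := h
  obtain ⟨k, -, rfl⟩ := mem_image.1 hu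
  have hnext : ∀ j : Fin ℓ, (j : ℕ) = k + 1 → d k ≠ d j := by
    intro j hj hdj
    have hmem : (d j, d j + j) ∈ shiftedRow d ∩ URS (d k, d k + k) :=
      mem_inter.2 ⟨mem_image_of_mem _ (mem_univ j), by simp [URS, ← hdj, hj, ← add_assoc]⟩
    rw [hsingle, mem_singleton] at hmem
    exact absurd (shiftedRow_box_injective d hmem) (by omega)
  have hgap : ∀ j, k < j → d k < d j := by
    intro j hkj
    refine (hd.1 hkj.le).lt_of_ne fun hdj => ?_
    let k' : Fin ℓ := ⟨k + 1, by omega⟩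
    have hkk' : k ≤ k' := Fin.le_iff_val_le_val.2 (Nat.le_succ _)
    have hk'j : k' ≤ j := Fin.le_iff_val_le_val.2 hkj
    exact hnext k' rfl (le_antisymm (hd.1 hkk') (hdj ▸ hd.1 hk'j))
  set d' := Function.update d k (d k + 1)
  have hmono : Monotone d' := by
    intro i j hij
    simp only [d', Function.update_apply]
    split_ifs with hi hj hj
    · exact le_rfl
    · exact hgap j (lt_of_le_of_ne (hi ▸ hij) (Ne.symm (hi ▸ hj)))
    · exact (hd.1 (hj ▸ hij)).trans (Nat.le_succ _)
    · exact hd.1 hij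
  have hmem : ∀ j, (d' j, d' j + j) ∈ l := by
    intro j
    by_cases hj : j = k
    · subst hj
      have : (d j + 1, d j + j + 1) ∈ l.cells := hURS (by simp [URS])
      simpa [d', add_right_comm] using this
    · simpa [d', hj] using hd.2 j
  refine ⟨d', ⟨hmono, hmem⟩, ?_⟩
  have hrest : (univ.erase k).image (fun j => (d j, d j + (j : ℕ))) =
      (univ.erase k).image (fun j => (d' j, d' j + (j : ℕ))) :=
    image_congr fun j hj => by simp [d', ne_of_mem_erase hj]
  have hnew : ((d k, d k + k).1 + 1, (d k, d k + k).2 + 1) = (d' k, d' k + k) := by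
    simp [d', add_right_comm]
  rw [shiftedRow, ← image_erase (shiftedRow_box_injective d), hrest, hnew,
    ← image_insert (fun j : Fin ℓ => (d' j, d' j + (j : ℕ))),
    insert_erase (mem_univ k), shiftedRow]

lemma exists_isAdmissibleShift_of_mem_excited {l : YoungDiagram} (h : ℓ ≤ l.rowLen 0)
    {E : Finset (ℕ × ℕ)} (hE : E ∈ Excited l (rowDiagram ℓ)) :
    ∃ d : Fin ℓ → ℕ, IsAdmissibleShift l d ∧ E = shiftedRow d := by
  induction hE with
  | refl => exact ⟨0, isAdmissibleShift_zero h, shiftedRow_zero.symm⟩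
  | tail _ hstep ih =>
    obtain ⟨d, hd, rfl⟩ := ih
    exact exists_isAdmissibleShift_of_exciteStep hd hstep

end ExcitedRows

open scoped Classical in
noncomputable def monotoneTuples (ℓ D : ℕ) : Finset (Fin ℓ → ℕ) :=
  {c ∈ Fintype.piFinset fun _ => range D | Monotone c}

lemma mem_monotoneTuples {ℓ D : ℕ} {c : Fin ℓ → ℕ} :
    c ∈ monotoneTuples ℓ D ↔ (∀ k, c k < D) ∧ Monotone c := by
  classical
  simp [monotoneTuples]

/-- Stars and bars: `c ↦ {c k + k}` sends monotone tuples to `ℓ`-subsets of `[0, ℓ + m)`. -/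
lemma card_monotoneTuples_le (ℓ m : ℕ) : #(monotoneTuples ℓ (m + 1)) ≤ (ℓ + m).choose ℓ := by
  classical
  have hstrict : ∀ c ∈ monotoneTuples ℓ (m + 1), StrictMono fun k : Fin ℓ => c k + (k : ℕ) :=
    fun c hc i j hij => add_lt_add_of_le_of_lt ((mem_monotoneTuples.1 hc).2 hij.le) hij
  have hmaps : ∀ c ∈ monotoneTuples ℓ (m + 1),
      univ.image (fun k : Fin ℓ => c k + (k : ℕ)) ∈ powersetCard ℓ (range (ℓ + m)) := by
    intro c hc
    refine mem_powersetCard.2 ⟨fun x hx => ?_, ?_⟩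
    · obtain ⟨k, -, rfl⟩ := mem_image.1 hx
      have := (mem_monotoneTuples.1 hc).1 k
      simp only [mem_range]
      omega
    · rw [card_image_of_injective _ (hstrict c hc).injective, card_univ, Fintype.card_fin]
  calc #(monotoneTuples ℓ (m + 1))
      ≤ #(powersetCard ℓ (range (ℓ + m))) := by
        refine card_le_card_of_injOn _ hmaps fun c hc c' hc' himg => ?_
        have hrange := congrArg ((↑) : Finset ℕ → Set ℕ) himg
        simp only [coe_image, coe_univ, Set.image_univ] at hrange
        have := ((hstrict c hc).range_inj (hstrict c' hc')).1 hrange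
        funext k
        exact Nat.add_right_cancel (congrFun this k)
    _ = (ℓ + m).choose ℓ := by rw [card_powersetCard, card_range]

/-- A block `{d | ⌊(g 0 + ⋯ + g (d - 1)) / A⌋ = j}` is an interval, so its `g`-weight is less than
the width `A` of the block plus its last term `g d ≤ A`. -/
lemma sum_filter_partialSum_div_eq_lt (g : ℕ → ℕ) {A : ℕ} (hA : 0 < A) (hg : ∀ d, g d ≤ A)
    (S : Finset ℕ) (j : ℕ) :
    ∑ d ∈ S with (∑ e ∈ range d, g e) / A = j, g d < 2 * A := by
  set G : ℕ → ℕ := fun d => ∑ e ∈ range d, g e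
  set T := {d ∈ S | G d / A = j}
  rcases T.eq_empty_or_nonempty with hT | hT
  · rw [hT, sum_empty]
    omega
  have hlo := (mem_filter.1 (T.min'_mem hT)).2
  have hhi := (mem_filter.1 (T.max'_mem hT)).2
  have hle : T.min' hT ≤ T.max' hT + 1 := (T.min'_le_max' hT).trans (Nat.le_succ _)
  have hsub : T ⊆ Ico (T.min' hT) (T.max' hT + 1) := fun t ht =>
    mem_Ico.2 ⟨T.min'_le t ht, Nat.lt_succ_of_le (T.le_max' t ht)⟩
  have htele : G (T.min' hT) + ∑ d ∈ Ico (T.min' hT) (T.max' hT + 1), g d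
      = G (T.max' hT) + g (T.max' hT) := by
    rw [sum_range_add_sum_Ico _ hle, sum_range_succ]
  have hfirst : j * A ≤ G (T.min' hT) := hlo ▸ Nat.div_mul_le_self _ _
  have hlast : G (T.max' hT) < A * (j + 1) := hhi ▸ Nat.lt_mul_div_succ _ hA
  have := sum_le_sum_of_subset (f := g) hsub
  have := hg (T.max' hT)
  nlinarith

/-- Grouping monotone tuples by the blocks of their entries, there are at most `(ℓ + m).choose ℓ`
block patterns and each contributes at most `(2 A) ^ ℓ`. -/
lemma sum_prod_monotoneTuples_le (g : ℕ → ℕ) {A m : ℕ} (hA : 0 < A) (hg : ∀ d, g d ≤ A)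
    (ℓ D : ℕ) (hsum : ∑ e ∈ range D, g e < (m + 1) * A) :
    ∑ c ∈ monotoneTuples ℓ D, ∏ k, g (c k) ≤ (ℓ + m).choose ℓ * (2 * A) ^ ℓ := by
  classical
  set block : ℕ → ℕ := fun d => (∑ e ∈ range d, g e) / A
  have hmaps : ∀ c ∈ monotoneTuples ℓ D, block ∘ c ∈ monotoneTuples ℓ (m + 1) := by
    intro c hc
    rw [mem_monotoneTuples] at hc ⊢
    refine ⟨fun k => ?_, fun i j hij => ?_⟩
    · have := sum_le_sum_of_subset (f := g) (range_subset_range.2 (hc.1 k).le)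
      exact Nat.div_lt_of_lt_mul (by linarith)
    · exact Nat.div_le_div_right (sum_le_sum_of_subset (range_subset_range.2 (hc.2 hij)))
  have hfiber : ∀ b : Fin ℓ → ℕ,
      ∑ c ∈ monotoneTuples ℓ D with block ∘ c = b, ∏ k, g (c k) ≤ (2 * A) ^ ℓ := by
    intro b
    have hsub : {c ∈ monotoneTuples ℓ D | block ∘ c = b} ⊆
        Fintype.piFinset fun k => {d ∈ range D | block d = b k} := by
      intro c hc
      rw [mem_filter, mem_monotoneTuples] at hc
      exact Fintype.mem_piFinset.2 fun k =>
        mem_filter.2 ⟨mem_range.2 (hc.1.1 k), congrFun hc.2 k⟩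
    calc ∑ c ∈ monotoneTuples ℓ D with block ∘ c = b, ∏ k, g (c k)
        ≤ ∑ c ∈ Fintype.piFinset fun k => {d ∈ range D | block d = b k}, ∏ k, g (c k) :=
          sum_le_sum_of_subset hsub
      _ = ∏ k, ∑ d ∈ range D with block d = b k, g d := (prod_univ_sum _ _).symm
      _ ≤ ∏ _k : Fin ℓ, 2 * A :=
          prod_le_prod' fun k _ => (sum_filter_partialSum_div_eq_lt g hA hg _ _).le
      _ = (2 * A) ^ ℓ := by rw [prod_const, card_univ, Fintype.card_fin]
  calc ∑ c ∈ monotoneTuples ℓ D, ∏ k, g (c k)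
      = ∑ b ∈ monotoneTuples ℓ (m + 1), ∑ c ∈ monotoneTuples ℓ D with block ∘ c = b,
          ∏ k, g (c k) := (sum_fiberwise_of_maps_to hmaps _).symm
    _ ≤ ∑ _b ∈ monotoneTuples ℓ (m + 1), (2 * A) ^ ℓ := sum_le_sum fun b _ => hfiber b
    _ ≤ (ℓ + m).choose ℓ * (2 * A) ^ ℓ := by
        rw [sum_const, smul_eq_mul]
        exact Nat.mul_le_mul_right _ (card_monotoneTuples_le ℓ m)

lemma excitedSum_rowDiagram_le (l : YoungDiagram) {ℓ : ℕ} (h : ℓ ≤ l.rowLen 0) :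
    excitedSum l (rowDiagram ℓ) ≤
      ∑ d ∈ monotoneTuples ℓ (l.colLen 0), ∏ k, hook l (d k, d k) := by
  classical
  have hsub : Excited l (rowDiagram ℓ) ⊆ (monotoneTuples ℓ (l.colLen 0)).image shiftedRow := by
    intro E hE
    obtain ⟨d, ⟨hmono, hmem⟩, rfl⟩ := exists_isAdmissibleShift_of_mem_excited h hE
    refine mem_image_of_mem _ (mem_monotoneTuples.2 ⟨fun k => ?_, hmono⟩)
    exact (YoungDiagram.mem_iff_lt_colLen.1 (hmem k)).trans_le (l.colLen_anti _ _ (Nat.zero_le _))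
  have hfin := (finite_toSet _).subset hsub
  calc excitedSum l (rowDiagram ℓ)
      = ∑ E ∈ hfin.toFinset, ∏ u ∈ E, hook l u := finsum_mem_eq_finite_toFinset_sum _ hfin
    _ ≤ ∑ E ∈ (monotoneTuples ℓ (l.colLen 0)).image shiftedRow, ∏ u ∈ E, hook l u :=
        sum_le_sum_of_subset (Set.Finite.toFinset_subset.2 hsub)
    _ = ∑ d ∈ monotoneTuples ℓ (l.colLen 0), ∏ k, hook l (d k, d k + k) := by
        rw [sum_image shiftedRow_injective.injOn]
        exact sum_congr rfl fun d _ => prod_image (shiftedRow_box_injective d).injOn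
    _ ≤ ∑ d ∈ monotoneTuples ℓ (l.colLen 0), ∏ k, hook l (d k, d k) :=
        sum_le_sum fun d _ => prod_le_prod' fun k _ => hook_le_hook_diag l _ _

lemma natCast_lt_floor_div_add_one_mul_ceil (n : ℕ) {a : ℝ} (ha : 0 < a) :
    n < (⌊(n : ℝ) / a⌋₊ + 1) * ⌈a⌉₊ := by
  have hfloor : (n : ℝ) / a < ⌊(n : ℝ) / a⌋₊ + 1 := Nat.lt_floor_add_one _
  have : (n : ℝ) < (⌊(n : ℝ) / a⌋₊ + 1) * ⌈a⌉₊ :=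
    calc (n : ℝ) = (n : ℝ) / a * a := (div_mul_cancel₀ _ ha.ne').symm
      _ < (⌊(n : ℝ) / a⌋₊ + 1) * a := mul_lt_mul_of_pos_right hfloor ha
      _ ≤ (⌊(n : ℝ) / a⌋₊ + 1) * ⌈a⌉₊ := by gcongr; exact Nat.le_ceil a
  exact_mod_cast this

theorem excited_sum_row_general_general (l : YoungDiagram) (a : ℝ)
    (ha1 : (maxHook l : ℝ) ≤ a)
    (ℓ : ℕ) (h1 : 1 ≤ ℓ) (h2 : ℓ ≤ l.rowLen 0) :
    (excitedSum l (rowDiagram ℓ) : ℝ) ≤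
      ((ℓ + ⌊(l.card : ℝ) / a⌋₊).choose ℓ : ℝ) * (4 * a) ^ ℓ := by
  have hcol : 0 < l.colLen 0 :=
    YoungDiagram.mem_iff_lt_colLen.1 (YoungDiagram.mem_iff_lt_rowLen.2 (by omega : 0 < l.rowLen 0))
  have hs : 1 ≤ maxHook l := by
    simp only [maxHook]
    omega
  have ha : 1 ≤ a := le_trans (by exact_mod_cast hs) ha1
  have hdiag : ∀ d, hook l (d, d) ≤ ⌈a⌉₊ := fun d =>
    Nat.cast_le.1 ((Nat.cast_le.2 (hook_diag_le_maxHook l d)).trans (ha1.trans (Nat.le_ceil a)))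
  have hnat : excitedSum l (rowDiagram ℓ) ≤
      (ℓ + ⌊(l.card : ℝ) / a⌋₊).choose ℓ * (2 * ⌈a⌉₊) ^ ℓ :=
    (excitedSum_rowDiagram_le l h2).trans <|
      sum_prod_monotoneTuples_le _ (by positivity) hdiag _ _ <|
        (sum_hook_diag_le_card l _).trans_lt (natCast_lt_floor_div_add_one_mul_ceil _ (by linarith))
  have hceil : (2 * ⌈a⌉₊ : ℝ) ≤ 4 * a := by
    linarith [Nat.ceil_lt_add_one (by linarith : 0 ≤ a)]
  calc (excitedSum l (rowDiagram ℓ) : ℝ)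
      ≤ ((ℓ + ⌊(l.card : ℝ) / a⌋₊).choose ℓ : ℝ) * (2 * ⌈a⌉₊ : ℝ) ^ ℓ := by exact_mod_cast hnat
    _ ≤ _ := by gcongr

/-- general bound on the excited sum of a row via thick hook decompositions
(Proposition `borne générale` of the paper). -/
theorem excited_sum_row_general (l : YoungDiagram) (a : ℝ)
    (ha1 : (maxHook l : ℝ) ≤ a) (ha2 : a ≤ (l.card : ℝ))
    (ℓ : ℕ) (h1 : 1 ≤ ℓ) (h2 : ℓ ≤ l.rowLen 0) :
    (excitedSum l (rowDiagram ℓ) : ℝ) ≤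
      ((ℓ + ⌊(l.card : ℝ) / a⌋₊).choose ℓ : ℝ) * (4 * a) ^ ℓ :=
  excited_sum_row_general_general l a ha1 ℓ h1 h2

end ThickHookPaper
end

section
/- Let n ≥ 1 and 1 ≤ k ≤ n be integers and let s̃ ≥ √n be such that h := n/s̃ and ℓ := k/h are positive integers with √k ≥ h. Let λ = [s̃^h] be the rectangular Young diagram with h rows of length s̃ and let μ = [ℓ^h] ⊆ λ be the rectangle with h rows of length ℓ. Then d_{λ\μ}/d_λ ≥ (2e)^{−k} · (s(λ)/n)^k. -/
open scoped BigOperators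

namespace ThickHookPaper

/-!
For `μ = [ℓ^h] ⊆ λ` with `λ` of at most `h` rows, Aitken's formula
`d_{λ\μ} = |λ\μ|! · det (1 / (λ_j - ℓ + i - j)!)_{i,j < h}` holds: both sides obey the recursion
over the removable corners of `λ`, the determinant through the column identity
`Σ_j det A(a - e_j) = (Σ_j a_j) · det A(a)`. For a rectangle the determinant is a Vandermonde
determinant, which yields the hook length formula and
`d_{λ\μ} / d_λ = ∏_{j<h} (s̃ + j)_ℓ / (n)_k` (falling factorials). Finally `(s̃ + j)_ℓ ≥ (s̃/e)^ℓ`,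
`(n)_k ≤ n^k`, and `s(λ) = s̃ + h - 1 ≤ 2 s̃` because `s̃ ≥ √n` forces `h ≤ s̃`.
-/

section Corners

open YoungDiagram

lemma rowLen_eq_of_forall_mem_iff {l : YoungDiagram} {i m : ℕ} (hm : ∀ j, (i, j) ∈ l ↔ j < m) :
    l.rowLen i = m :=
  eq_of_forall_lt_iff fun j => by rw [← mem_iff_lt_rowLen, hm]

lemma rowLen_eq_zero_of_colLen_le {l : YoungDiagram} {i : ℕ} (hi : l.colLen 0 ≤ i) :
    l.rowLen i = 0 := by
  by_contra hne
  have := mem_iff_lt_colLen.mp (mem_iff_lt_rowLen.mpr (Nat.pos_of_ne_zero hne))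
  omega

lemma colLen_le_colLen {ν l : YoungDiagram} (hle : ν ≤ l) (j : ℕ) : ν.colLen j ≤ l.colLen j :=
  forall_lt_iff_le.mp fun _ hi => mem_iff_lt_colLen.mp (hle (mem_iff_lt_colLen.mpr hi))

lemma card_eq_sum_rowLen {l : YoungDiagram} {h : ℕ} (hl : l.colLen 0 ≤ h) :
    l.card = ∑ i ∈ Finset.range h, l.rowLen i := by
  have hcells : l.cells = (Finset.range h).biUnion l.row := by
    ext c
    simp only [Finset.mem_biUnion, Finset.mem_range, mem_row_iff, mem_cells]
    refine ⟨fun hc => ⟨c.1, ?_, hc, rfl⟩, fun ⟨_, _, hc, _⟩ => hc⟩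
    have := mem_iff_lt_colLen.mp (l.up_left_mem le_rfl (Nat.zero_le c.2) hc)
    omega
  rw [YoungDiagram.card, hcells, Finset.card_biUnion]
  · simp only [rowLen_eq_card]
  · intro a _ b _ hab
    exact Finset.disjoint_left.mpr fun c hca hcb =>
      hab ((mem_row_iff.mp hca).2.symm.trans (mem_row_iff.mp hcb).2)

lemma mem_corners {l : YoungDiagram} {c : ℕ × ℕ} :
    c ∈ corners l ↔ c ∈ l ∧ (c.1, c.2 + 1) ∉ l ∧ (c.1 + 1, c.2) ∉ l := by
  simp [corners]

lemma mk_mem_corners_iff {l : YoungDiagram} {i j : ℕ} :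
    (i, j) ∈ corners l ↔ j + 1 = l.rowLen i ∧ l.rowLen (i + 1) < l.rowLen i := by
  simp only [mem_corners, mem_iff_lt_rowLen]
  omega

lemma isLowerSet_erase_of_mem_corners {l : YoungDiagram} {c : ℕ × ℕ} (hc : c ∈ corners l) :
    IsLowerSet (↑(l.cells.erase c) : Set (ℕ × ℕ)) := by
  obtain ⟨-, hright, hbelow⟩ := mem_corners.mp hc
  rintro ⟨i', j'⟩ ⟨i, j⟩ ⟨hi, hj⟩ hmem
  simp only [Finset.coe_erase, Set.mem_sdiff, Finset.mem_coe, Set.mem_singleton_iff,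
    mem_cells] at hmem ⊢
  refine ⟨l.up_left_mem hi hj hmem.1, ?_⟩
  rintro rfl
  simp only at hi hj
  rcases hi.lt_or_eq with hi | rfl
  · exact hbelow (l.up_left_mem hi hj hmem.1)
  rcases hj.lt_or_eq with hj | rfl
  · exact hright (l.up_left_mem le_rfl hj hmem.1)
  · exact hmem.2 rfl

-- Junk value `λ` when `c` is not a corner.
noncomputable def eraseCorner (l : YoungDiagram) (c : ℕ × ℕ) : YoungDiagram :=
  if hc : c ∈ corners l then ⟨l.cells.erase c, isLowerSet_erase_of_mem_corners hc⟩ else l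

lemma cells_eraseCorner {l : YoungDiagram} {c : ℕ × ℕ} (hc : c ∈ corners l) :
    (eraseCorner l c).cells = l.cells.erase c := by
  simp [eraseCorner, hc]

lemma mem_eraseCorner {l : YoungDiagram} {c d : ℕ × ℕ} (hc : c ∈ corners l) :
    d ∈ eraseCorner l c ↔ d ≠ c ∧ d ∈ l := by
  rw [← mem_cells, cells_eraseCorner hc, Finset.mem_erase, mem_cells]

lemma eraseCorner_le (l : YoungDiagram) (c : ℕ × ℕ) : eraseCorner l c ≤ l := by
  by_cases hc : c ∈ corners l
  · exact fun d hd => ((mem_eraseCorner hc).mp hd).2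
  · simp [eraseCorner, hc]

lemma card_eraseCorner {l : YoungDiagram} {c : ℕ × ℕ} (hc : c ∈ corners l) :
    l.card = (eraseCorner l c).card + 1 := by
  rw [YoungDiagram.card, YoungDiagram.card, cells_eraseCorner hc,
    Finset.card_erase_add_one ((mem_cells _).mpr (mem_corners.mp hc).1)]

lemma eraseCorner_injOn {l : YoungDiagram} {c d : ℕ × ℕ} (hc : c ∈ corners l)
    (hd : d ∈ corners l) (h : eraseCorner l c = eraseCorner l d) : c = d := by
  by_contra hne
  have := (mem_eraseCorner hd).mpr ⟨hne, (mem_corners.mp hc).1⟩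
  exact ((mem_eraseCorner hc).mp (h ▸ this)).1 rfl

lemma rowLen_eraseCorner {l : YoungDiagram} {c : ℕ × ℕ} (hc : c ∈ corners l) (i : ℕ) :
    (eraseCorner l c).rowLen i = if i = c.1 then l.rowLen i - 1 else l.rowLen i := by
  obtain ⟨ci, cj⟩ := c
  have hcj := (mk_mem_corners_iff.mp hc).1
  apply rowLen_eq_of_forall_mem_iff
  intro j
  rw [mem_eraseCorner hc, mem_iff_lt_rowLen]
  split_ifs with hi
  · subst hi
    simp only [ne_eq, Prod.mk.injEq, true_and]
    omega
  · simp [hi]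

lemma exists_mem_corners_eq_eraseCorner {ν l : YoungDiagram} (hle : ν ≤ l)
    (hcard : l.card = ν.card + 1) : ∃ c ∈ corners l, ν = eraseCorner l c := by
  have hsub : ν.cells ⊆ l.cells := cells_subset_iff.mpr hle
  obtain ⟨c, hc⟩ : ∃ c, l.cells \ ν.cells = {c} := by
    rw [← Finset.card_eq_one, Finset.card_sdiff_of_subset hsub]
    exact Nat.sub_eq_of_eq_add' hcard
  obtain ⟨hcl, hcν⟩ := Finset.mem_sdiff.mp (hc ▸ Finset.mem_singleton_self c)
  have hν : ν.cells = l.cells.erase c := by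
    ext d
    have := Finset.ext_iff.mp hc d
    simp only [Finset.mem_sdiff, Finset.mem_singleton] at this
    simp only [Finset.mem_erase]
    exact ⟨fun hd => ⟨fun hdc => (this.mpr hdc).2 hd, hsub hd⟩,
      fun ⟨hdc, hdl⟩ => by_contra fun hdν => hdc (this.mp ⟨hdl, hdν⟩)⟩
  have hmemν : ∀ d, d ≠ c → d ∈ l → d ∈ ν := fun d hdc hdl => by
    rw [← mem_cells, hν]
    exact Finset.mem_erase.mpr ⟨hdc, hdl⟩
  have hcorner : c ∈ corners l := by
    refine mem_corners.mpr ⟨hcl, fun hr => hcν ?_, fun hb => hcν ?_⟩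
    · exact ν.up_left_mem le_rfl (Nat.le_succ c.2)
        (hmemν _ (fun h => by simpa using congrArg Prod.snd h) hr)
    · exact ν.up_left_mem (Nat.le_succ c.1) le_rfl
        (hmemν _ (fun h => by simpa using congrArg Prod.fst h) hb)
  exact ⟨c, hcorner, YoungDiagram.ext (hν.trans (cells_eraseCorner hcorner).symm)⟩

end Corners

section Rectangles

open YoungDiagram

lemma mem_rect {a b : ℕ} {c : ℕ × ℕ} : c ∈ rect a b ↔ c.1 < b ∧ c.2 < a := by
  change c ∈ Finset.range b ×ˢ Finset.range a ↔ _
  simp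

lemma card_rect (a b : ℕ) : (rect a b).card = a * b := by
  change (Finset.range b ×ˢ Finset.range a).card = _
  simp [mul_comm]

lemma rowLen_rect {a b i : ℕ} (hi : i < b) : (rect a b).rowLen i = a :=
  rowLen_eq_of_forall_mem_iff fun j => by simp [mem_rect, hi]

lemma colLen_rect {a b : ℕ} (ha : 0 < a) : (rect a b).colLen 0 = b :=
  eq_of_forall_lt_iff fun i => by rw [← mem_iff_lt_colLen, mem_rect]; simp [ha]

lemma colLen_rect_le (a b : ℕ) : (rect a b).colLen 0 ≤ b :=
  forall_lt_iff_le.mp fun _ hi => (mem_rect.mp (mem_iff_lt_colLen.mpr hi)).1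

lemma rect_zero_left (b : ℕ) : rect 0 b = ⊥ :=
  le_bot_iff.mp fun _ hc => absurd (mem_rect.mp hc).2 (Nat.not_lt_zero _)

lemma rect_le_iff {a b : ℕ} {l : YoungDiagram} : rect a b ≤ l ↔ ∀ i < b, a ≤ l.rowLen i := by
  refine ⟨fun h i hi => ?_, fun h c hc => ?_⟩
  · by_contra! hlt
    exact (mem_iff_lt_rowLen.mp (h (mem_rect.mpr ⟨hi, hlt⟩))).false
  · obtain ⟨hi, hj⟩ := mem_rect.mp hc
    exact mem_iff_lt_rowLen.mpr (hj.trans_le (h c.1 hi))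

lemma maxHook_rect {a b : ℕ} (ha : 0 < a) (hb : 0 < b) : maxHook (rect a b) = a + b - 1 := by
  rw [maxHook, rowLen_rect hb, colLen_rect ha]

end Rectangles

section Chains

open YoungDiagram

def SatChain (μ l : YoungDiagram) (N : ℕ) : Type :=
  {f : Fin (N + 1) → YoungDiagram // f 0 = μ ∧ f (Fin.last N) = l ∧
    ∀ i : Fin N, f i.castSucc ≤ f i.succ ∧ (f i.succ).card = (f i.castSucc).card + 1}

lemma skewSYT_eq_card_satChain (μ l : YoungDiagram) :
    skewSYT μ l = Nat.card (SatChain μ l (l.card - μ.card)) := rfl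

lemma SatChain.monotone {μ l : YoungDiagram} {N : ℕ} (f : SatChain μ l N) : Monotone f.1 :=
  Fin.monotone_iff_le_succ.mpr fun i => (f.2.2.2 i).1

lemma SatChain.le_last {μ l : YoungDiagram} {N : ℕ} (f : SatChain μ l N) (i : Fin (N + 1)) :
    f.1 i ≤ l :=
  (f.monotone (Fin.le_last i)).trans_eq f.2.2.1

instance (μ l : YoungDiagram) (N : ℕ) : Finite (SatChain μ l N) :=
  Finite.of_injective (fun f i => (⟨(f.1 i).cells, Finset.mem_powerset.mpr
      (cells_subset_iff.mpr (f.le_last i))⟩ : l.cells.powerset))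
    fun _ _ hfg => Subtype.ext <| funext fun i =>
      YoungDiagram.ext (congrArg Subtype.val (congrFun hfg i))

lemma skewSYT_self (l : YoungDiagram) : skewSYT l l = 1 := by
  rw [skewSYT_eq_card_satChain, Nat.sub_self, Nat.card_eq_one_iff_exists]
  refine ⟨⟨fun _ => l, rfl, rfl, finZeroElim⟩, fun f => Subtype.ext (funext fun i => ?_)⟩
  rw [Fin.fin_one_eq_zero i]
  exact f.2.1

lemma skewSYT_eq_zero_of_not_le {μ l : YoungDiagram} (h : ¬ μ ≤ l) : skewSYT μ l = 0 := by
  rw [skewSYT_eq_card_satChain, Nat.card_eq_zero]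
  exact Or.inl ⟨fun f => h (f.2.1 ▸ f.le_last 0)⟩

def SatChain.snoc {μ l : YoungDiagram} {N : ℕ} (c : corners l)
    (f : SatChain μ (eraseCorner l c) N) : SatChain μ l (N + 1) :=
  ⟨Fin.snoc f.1 l, (Fin.snoc_apply_zero _ _).trans f.2.1, Fin.snoc_last _ _, fun i => by
    induction i using Fin.lastCases with
    | last => simpa [f.2.2.1] using ⟨eraseCorner_le l c, card_eraseCorner c.2⟩
    | cast j =>
      rw [Fin.succ_castSucc, Fin.snoc_castSucc, Fin.snoc_castSucc]
      exact f.2.2.2 j⟩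

lemma satChain_snoc_bijective (μ l : YoungDiagram) (N : ℕ) :
    Function.Bijective fun x : Σ c : corners l, SatChain μ (eraseCorner l c) N =>
      SatChain.snoc x.1 x.2 := by
  constructor
  · rintro ⟨c, f⟩ ⟨d, g⟩ hfg
    have hinit : f.1 = g.1 := by
      simpa [SatChain.snoc] using congrArg (fun F => Fin.init F.1) hfg
    obtain rfl : c = d := Subtype.ext <| eraseCorner_injOn c.2 d.2 <| by
      rw [← f.2.2.1, ← g.2.2.1, hinit]
    exact Sigma.ext rfl (heq_of_eq (Subtype.ext hinit))
  · rintro ⟨F, hfirst, hlast, hsteps⟩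
    have hstep := hsteps (Fin.last N)
    rw [Fin.succ_last, hlast] at hstep
    obtain ⟨c, hc, hν⟩ := exists_mem_corners_eq_eraseCorner hstep.1 hstep.2
    refine ⟨⟨⟨c, hc⟩, ⟨Fin.init F, hfirst, hν, fun i => ?_⟩⟩, ?_⟩
    · have := hsteps i.castSucc
      rw [Fin.succ_castSucc] at this
      exact this
    · refine Subtype.ext ?_
      change Fin.snoc (Fin.init F) l = F
      rw [← hlast, Fin.snoc_init_self]

lemma skewSYT_eq_sum_eraseCorner {μ l : YoungDiagram} (h : μ.card < l.card) :
    skewSYT μ l = ∑ c ∈ corners l, skewSYT μ (eraseCorner l c) := by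
  obtain ⟨N, hN⟩ : ∃ N, l.card - μ.card = N + 1 := ⟨_, (Nat.succ_pred_eq_of_pos (by omega)).symm⟩
  rw [skewSYT_eq_card_satChain, hN, ← Nat.card_eq_of_bijective _ (satChain_snoc_bijective μ l N),
    Nat.card_sigma, ← Finset.sum_coe_sort (corners l)]
  refine Finset.sum_congr rfl fun c _ => ?_
  have hN' : (eraseCorner l c).card - μ.card = N := by
    have := card_eraseCorner c.2
    omega
  rw [skewSYT_eq_card_satChain, hN']

end Chains

section Aitken

open Matrix Nat

noncomputable def invFactorial (m : ℤ) : ℚ := if 0 ≤ m then ((m.toNat)! : ℚ)⁻¹ else 0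

lemma invFactorial_of_neg {m : ℤ} (hm : m < 0) : invFactorial m = 0 := if_neg (by omega)

lemma invFactorial_sub_one (m : ℤ) : invFactorial (m - 1) = m * invFactorial m := by
  rcases lt_trichotomy m 0 with hm | rfl | hm
  · rw [invFactorial_of_neg (by omega), invFactorial_of_neg hm, mul_zero]
  · rw [invFactorial_of_neg (by omega), Int.cast_zero, zero_mul]
  · obtain ⟨n, rfl⟩ : ∃ n : ℕ, m = n + 1 := ⟨(m - 1).toNat, by omega⟩
    rw [add_sub_cancel_right, invFactorial, invFactorial, if_pos (by omega), if_pos (by omega),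
      Int.toNat_natCast, show ((n : ℤ) + 1).toNat = n + 1 by omega, factorial_succ]
    push_cast
    field_simp

lemma factorial_mul_invFactorial_sub (n k : ℕ) :
    (n ! : ℚ) * invFactorial ((n : ℤ) - k) = n.descFactorial k := by
  rcases le_or_gt k n with hk | hk
  · rw [invFactorial, if_pos (by omega), show ((n : ℤ) - k).toNat = n - k by omega,
      ← factorial_mul_descFactorial hk]
    push_cast
    field_simp
  · rw [invFactorial_of_neg (by omega), descFactorial_eq_zero_iff_lt.mpr hk]
    simp

-- The matrix of Aitken's determinantal formula for the number of standard tableaux.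
noncomputable def aitkenMatrix {h : ℕ} (a : Fin h → ℤ) : Matrix (Fin h) (Fin h) ℚ :=
  of fun i j => invFactorial (a j + i - j)

lemma det_aitkenMatrix_const (h c : ℕ) :
    (aitkenMatrix fun _ : Fin h => (c : ℤ)).det =
      (∏ j : Fin h, (j ! : ℚ)) / ∏ j : Fin h, ((c + j)! : ℚ) := by
  rw [eq_div_iff (Finset.prod_ne_zero_iff.mpr fun j _ => by positivity), mul_comm]
  obtain _ | m := h
  · simp
  have hentry : ∀ i j : Fin (m + 1), ((c + j : ℕ)! : ℚ) *
      (aitkenMatrix fun _ => (c : ℤ)).submatrix Fin.revPerm Fin.revPerm i j =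
        (descPochhammer ℚ i).eval ((c + j : ℕ) : ℚ) := by
    intro i j
    rw [descPochhammer_eval_eq_descFactorial, ← factorial_mul_invFactorial_sub]
    simp only [aitkenMatrix, submatrix_apply, of_apply, Fin.revPerm_apply, Fin.val_rev]
    congr 2
    omega
  calc (∏ j : Fin (m + 1), ((c + j)! : ℚ)) * (aitkenMatrix fun _ => (c : ℤ)).det
      = (of fun i j : Fin (m + 1) => (descPochhammer ℚ i).eval ((c + j : ℕ) : ℚ)).det := by
        rw [← det_submatrix_equiv_self Fin.revPerm, ← det_mul_row]
        congr 1
        ext i j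
        rw [of_apply, of_apply, hentry]
    _ = (vandermonde fun i : Fin (m + 1) => (i : ℚ) + c).det := by
        rw [det_eval_matrixOfPolynomials_eq_det_vandermonde _ _ (descPochhammer_natDegree ℚ ·)
          (monic_descPochhammer ℚ ·), ← det_transpose]
        congr 1
        ext i j
        simp [add_comm]
    _ = ∏ j : Fin (m + 1), (j ! : ℚ) := by
        rw [det_vandermonde_add, det_vandermonde_id_eq_superFactorial,
          ← prod_range_succ_factorial, Fin.prod_univ_eq_prod_range (fun j => (j ! : ℚ))]
        push_cast
        rfl

lemma sum_det_updateCol_mul {n R : Type*} [Fintype n] [DecidableEq n] [CommRing R]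
    (A B : Matrix n n R) :
    ∑ j, (A.updateCol j fun i => (B * A) i j).det = B.trace * A.det := by
  have hcramer : ∀ j, (A.updateCol j fun i => (B * A) i j).det = (A.adjugate * (B * A)) j j := by
    intro j
    rw [← cramer_apply, cramer_eq_adjugate_mulVec, mul_apply]
    rfl
  rw [Finset.sum_congr rfl fun j _ => hcramer j]
  change trace (A.adjugate * (B * A)) = _
  rw [← Matrix.mul_assoc, trace_mul_comm, ← Matrix.mul_assoc, mul_adjugate, Matrix.smul_mul,
    Matrix.one_mul, trace_smul, smul_eq_mul, mul_comm]

lemma sum_det_aitkenMatrix_update {h : ℕ} (a : Fin h → ℤ) :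
    ∑ j, (aitkenMatrix (Function.update a j (a j - 1))).det =
      ((∑ j, a j : ℤ) : ℚ) * (aitkenMatrix a).det := by
  set A := aitkenMatrix a
  set D : Matrix (Fin h) (Fin h) ℚ := diagonal fun i => (i : ℚ)
  -- `invFactorial (m - 1) = m * invFactorial m` with `m = (a j - j) + i`
  have hcol : ∀ j, aitkenMatrix (Function.update a j (a j - 1)) =
      A.updateCol j ((((a j - j : ℤ) : ℚ) • fun i => A i j) + fun i => (D * A) i j) := by
    intro j
    ext i k
    rcases eq_or_ne k j with rfl | hk
    · simp only [aitkenMatrix, A, D, updateCol_self, of_apply, Function.update_self, Pi.add_apply,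
        Pi.smul_apply, smul_eq_mul, diagonal_mul]
      rw [show a k - 1 + i - k = a k + i - k - 1 by ring, invFactorial_sub_one]
      push_cast
      ring
    · simp [aitkenMatrix, A, hk]
  simp only [hcol, det_updateCol_add, det_updateCol_smul, updateCol_eq_self]
  rw [Finset.sum_add_distrib, sum_det_updateCol_mul, trace_diagonal, ← Finset.sum_mul,
    ← add_mul, ← Finset.sum_add_distrib]
  push_cast
  simp

lemma det_aitkenMatrix_update_eq_zero_of_eq {h : ℕ} {a : Fin h → ℤ} {j j' : Fin h}
    (hj : j'.1 = j.1 + 1) (ha : a j = a j') :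
    (aitkenMatrix (Function.update a j (a j - 1))).det = 0 := by
  have hne : j ≠ j' := fun h => by simp [h] at hj
  refine det_zero_of_column_eq hne fun i => ?_
  simp only [aitkenMatrix, of_apply, Function.update_self, Function.update_of_ne hne.symm]
  congr 1
  omega

lemma det_aitkenMatrix_update_eq_zero_of_nonpos {h : ℕ} {a : Fin h → ℤ} {j : Fin h}
    (hj : j.1 + 1 = h) (ha : a j ≤ 0) :
    (aitkenMatrix (Function.update a j (a j - 1))).det = 0 := by
  refine det_eq_zero_of_column_eq_zero j fun i => ?_
  simp only [aitkenMatrix, of_apply, Function.update_self]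
  exact invFactorial_of_neg (by omega)

end Aitken

section SkewRect

open YoungDiagram Nat

def skewRowLens (l : YoungDiagram) (ℓ h : ℕ) : Fin h → ℤ := fun j => (l.rowLen j : ℤ) - ℓ

lemma sum_skewRowLens {l : YoungDiagram} {ℓ h : ℕ} (hμ : rect ℓ h ≤ l) (hl : l.colLen 0 ≤ h) :
    ∑ j, skewRowLens l ℓ h j = ((l.card - (rect ℓ h).card : ℕ) : ℤ) := by
  have hle : (rect ℓ h).card ≤ l.card := Finset.card_le_card (cells_subset_iff.mpr hμ)
  rw [card_eq_sum_rowLen hl, card_rect] at hle ⊢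
  rw [Nat.cast_sub hle]
  simp only [skewRowLens, Finset.sum_sub_distrib,
    Fin.sum_univ_eq_sum_range (fun i => (l.rowLen i : ℤ))]
  simp [mul_comm]

lemma skewRowLens_eraseCorner {l : YoungDiagram} {ℓ h : ℕ} {j : Fin h}
    (hc : (j.1, l.rowLen j - 1) ∈ corners l) :
    skewRowLens (eraseCorner l (j, l.rowLen j - 1)) ℓ h =
      Function.update (skewRowLens l ℓ h) j (skewRowLens l ℓ h j - 1) := by
  have hpos := (mk_mem_corners_iff.mp hc).1
  ext j'
  rcases eq_or_ne j' j with rfl | hj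
  · simp only [skewRowLens, rowLen_eraseCorner hc, if_pos, Function.update_self]
    omega
  · simp [skewRowLens, rowLen_eraseCorner hc, Fin.val_ne_of_ne hj, hj]

lemma sum_corners_eq_sum_rows {M : Type*} [AddCommMonoid M] {l : YoungDiagram} {h : ℕ}
    (hl : l.colLen 0 ≤ h) (F : ℕ × ℕ → M) :
    ∑ c ∈ corners l, F c =
      ∑ j : Fin h, if (j.1, l.rowLen j - 1) ∈ corners l then F (j, l.rowLen j - 1) else 0 := by
  have himage : corners l = (Finset.univ.filter fun j : Fin h =>
      (j.1, l.rowLen j - 1) ∈ corners l).image fun j : Fin h => (j.1, l.rowLen j - 1) := by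
    ext ⟨a, b⟩
    simp only [Finset.mem_image, Finset.mem_filter, Finset.mem_univ, true_and]
    refine ⟨fun hc => ⟨⟨a, ?_⟩, ?_⟩, fun ⟨k, hk, hki⟩ => hki ▸ hk⟩
    · exact (mem_iff_lt_colLen.mp (l.up_left_mem le_rfl (Nat.zero_le b)
        (mem_corners.mp hc).1)).trans_le hl
    · obtain rfl : b = l.rowLen a - 1 := by have := (mk_mem_corners_iff.mp hc).1; omega
      exact ⟨hc, rfl⟩
  conv_lhs => rw [himage]
  rw [Finset.sum_image fun j _ k _ hjk => Fin.ext (congrArg Prod.fst hjk), Finset.sum_filter]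

lemma det_aitkenMatrix_update_eq_zero_of_not_mem_corners {l : YoungDiagram} {ℓ h : ℕ}
    (hl : l.colLen 0 ≤ h) {j : Fin h} (hc : (j.1, l.rowLen j - 1) ∉ corners l) :
    (aitkenMatrix (Function.update (skewRowLens l ℓ h) j (skewRowLens l ℓ h j - 1))).det = 0 := by
  have hanti := l.rowLen_anti j (j + 1) (Nat.le_succ _)
  rw [mk_mem_corners_iff] at hc
  rcases (show j.1 + 1 ≤ h from j.is_lt).lt_or_eq with hj | hj
  · exact det_aitkenMatrix_update_eq_zero_of_eq (j' := ⟨j + 1, hj⟩) rfl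
      (by simp only [skewRowLens]; omega)
  · have := rowLen_eq_zero_of_colLen_le (hl.trans hj.ge)
    exact det_aitkenMatrix_update_eq_zero_of_nonpos hj (by simp only [skewRowLens]; omega)

theorem skewSYT_rect_eq_det {ℓ h : ℕ} {l : YoungDiagram} (hμ : rect ℓ h ≤ l)
    (hl : l.colLen 0 ≤ h) :
    (skewSYT (rect ℓ h) l : ℚ) =
      (l.card - (rect ℓ h).card)! * (aitkenMatrix (skewRowLens l ℓ h)).det := by
  induction hN : l.card using Nat.strong_induction_on generalizing l with
  | _ N IH =>
  subst hN
  have hrows := rect_le_iff.mp hμ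
  rcases (show (rect ℓ h).card ≤ l.card from
    Finset.card_le_card (cells_subset_iff.mpr hμ)).eq_or_lt with heq | hlt
  · obtain rfl : rect ℓ h = l :=
      YoungDiagram.ext (Finset.eq_of_subset_of_card_le (cells_subset_iff.mpr hμ) heq.ge)
    have hzero : skewRowLens (rect ℓ h) ℓ h = fun _ => ((0 : ℕ) : ℤ) := by
      ext j
      simp [skewRowLens, rowLen_rect j.is_lt]
    rw [skewSYT_self, Nat.sub_self, hzero, det_aitkenMatrix_const]
    simp [Finset.prod_ne_zero_iff, Nat.factorial_ne_zero]
  set a := skewRowLens l ℓ h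
  -- Removing the corner of row `j` lowers `a j` by one; rows without a corner give a matrix with
  -- two equal columns or a vanishing last column.
  have hterm : ∀ j : Fin h,
      (if (j.1, l.rowLen j - 1) ∈ corners l then
        (skewSYT (rect ℓ h) (eraseCorner l (j, l.rowLen j - 1)) : ℚ) else 0) =
      (l.card - (rect ℓ h).card - 1)! * (aitkenMatrix (Function.update a j (a j - 1))).det := by
    intro j
    split_ifs with hc
    swap
    · rw [det_aitkenMatrix_update_eq_zero_of_not_mem_corners hl hc, mul_zero]
    have hcard := card_eraseCorner hc
    have hcorner := mk_mem_corners_iff.mp hc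
    rcases (hrows j j.is_lt).eq_or_lt with hrow | hrow
    · have hlast : j.1 + 1 = h := by
        by_contra hne
        have := hrows (j + 1) (by omega)
        omega
      have hnot : ¬ rect ℓ h ≤ eraseCorner l (j, l.rowLen j - 1) := fun hle => by
        have := rect_le_iff.mp hle j j.is_lt
        rw [rowLen_eraseCorner hc, if_pos rfl] at this
        omega
      rw [skewSYT_eq_zero_of_not_le hnot, det_aitkenMatrix_update_eq_zero_of_nonpos hlast
        (by simp only [a, skewRowLens]; omega), Nat.cast_zero, mul_zero]
    · have hle : rect ℓ h ≤ eraseCorner l (j, l.rowLen j - 1) := rect_le_iff.mpr fun i hi => by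
        rw [rowLen_eraseCorner hc]
        dsimp only
        split_ifs with hij
        · subst hij
          omega
        · exact hrows i hi
      rw [IH _ (by omega) hle ((colLen_le_colLen (eraseCorner_le _ _) 0).trans hl) rfl,
        skewRowLens_eraseCorner hc]
      congr 3
      omega
  rw [skewSYT_eq_sum_eraseCorner hlt, Nat.cast_sum, sum_corners_eq_sum_rows hl,
    Finset.sum_congr rfl fun j _ => hterm j, ← Finset.mul_sum, sum_det_aitkenMatrix_update,
    sum_skewRowLens hμ hl, Int.cast_natCast, ← mul_assoc, ← Nat.cast_mul]
  rw [mul_comm _ (l.card - _), Nat.mul_factorial_pred (by omega)]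

end SkewRect

section RectangleCounts

open Nat

lemma skewSYT_rect_rect {ℓ a h : ℕ} (hℓa : ℓ ≤ a) :
    (skewSYT (rect ℓ h) (rect a h) : ℚ) =
      ((a - ℓ) * h)! * (∏ j : Fin h, (j ! : ℚ)) / ∏ j : Fin h, ((a - ℓ + j)! : ℚ) := by
  have hrows : skewRowLens (rect a h) ℓ h = fun _ => ((a - ℓ : ℕ) : ℤ) := by
    ext j
    simp [skewRowLens, rowLen_rect j.is_lt, hℓa]
  rw [skewSYT_rect_eq_det (rect_le_iff.mpr fun i hi => (rowLen_rect hi).symm ▸ hℓa)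
    (colLen_rect_le a h), hrows, det_aitkenMatrix_const, card_rect, card_rect, ← Nat.sub_mul,
    mul_div_assoc]

/-- The hook length formula for rectangles. -/
lemma dim_rect (a h : ℕ) :
    (dim (rect a h) : ℚ) = (a * h)! * (∏ j : Fin h, (j ! : ℚ)) / ∏ j : Fin h, ((a + j)! : ℚ) := by
  simpa [dim, rect_zero_left] using skewSYT_rect_rect (ℓ := 0) (h := h) (Nat.zero_le a)

lemma skewSYT_rect_div_dim_rect {ℓ a h : ℕ} (hℓa : ℓ ≤ a) :
    (skewSYT (rect ℓ h) (rect a h) : ℝ) / dim (rect a h) =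
      (∏ j : Fin h, ((a + j).descFactorial ℓ : ℝ)) / (a * h).descFactorial (ℓ * h) := by
  have hq : (skewSYT (rect ℓ h) (rect a h) : ℚ) / dim (rect a h) =
      (∏ j : Fin h, ((a + j).descFactorial ℓ : ℚ)) / (a * h).descFactorial (ℓ * h) := by
    have hrow : ∀ j : Fin h, ((a + j)! : ℚ) = (a - ℓ + j)! * (a + j).descFactorial ℓ := fun j => by
      rw [← Nat.cast_mul, ← factorial_mul_descFactorial (n := a + j) (k := ℓ) (by omega), show a + j - ℓ = a - ℓ + j by omega]
    have htotal : ((a * h)! : ℚ) = ((a - ℓ) * h)! * (a * h).descFactorial (ℓ * h) := by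
      rw [← Nat.cast_mul, ← factorial_mul_descFactorial (Nat.mul_le_mul_right h hℓa), Nat.sub_mul]
    rw [skewSYT_rect_rect hℓa, dim_rect, htotal, Finset.prod_congr rfl fun j _ => hrow j,
      Finset.prod_mul_distrib]
    have : ∀ j : Fin h, ((a - ℓ + j)! : ℚ) ≠ 0 := fun j => by positivity
    have : ∀ j : Fin h, ((a + j).descFactorial ℓ : ℚ) ≠ 0 := fun j =>
      Nat.cast_ne_zero.mpr (descFactorial_pos.mpr (by omega)).ne'
    field_simp [Finset.prod_ne_zero_iff.mpr fun j _ => this j]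
  simpa using congrArg (fun q : ℚ => (q : ℝ)) hq

end RectangleCounts

section Estimates

open Nat Real

lemma pow_mul_factorial_le_pow_mul_descFactorial {a ℓ : ℕ} (hℓa : ℓ ≤ a) :
    a ^ ℓ * ℓ ! ≤ ℓ ^ ℓ * a.descFactorial ℓ := by
  have key : ∏ t ∈ Finset.range ℓ, a * (ℓ - t) ≤ ∏ t ∈ Finset.range ℓ, ℓ * (a - t) :=
    Finset.prod_le_prod' fun t _ => by
      rw [Nat.mul_sub, Nat.mul_sub, mul_comm a ℓ]
      exact Nat.sub_le_sub_left (Nat.mul_le_mul_right t hℓa) _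
  simpa [Finset.prod_mul_distrib, ← descFactorial_eq_prod_range, descFactorial_self] using key

lemma div_exp_one_pow_le_descFactorial {a ℓ : ℕ} (hℓa : ℓ ≤ a) :
    ((a : ℝ) / exp 1) ^ ℓ ≤ a.descFactorial ℓ := by
  have hfact : (ℓ : ℝ) ^ ℓ ≤ exp 1 ^ ℓ * ℓ ! := by
    rw [← exp_nat_mul, mul_one, ← div_le_iff₀ (by positivity)]
    exact pow_div_factorial_le_exp _ (Nat.cast_nonneg ℓ) ℓ
  have hmain : (a : ℝ) ^ ℓ * ℓ ! ≤ ℓ ^ ℓ * a.descFactorial ℓ := by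
    exact_mod_cast pow_mul_factorial_le_pow_mul_descFactorial hℓa
  rw [div_pow, div_le_iff₀ (by positivity)]
  refine le_of_mul_le_mul_right ?_ (by positivity : (0 : ℝ) < ℓ !)
  calc (a : ℝ) ^ ℓ * ℓ ! ≤ ℓ ^ ℓ * a.descFactorial ℓ := hmain
    _ ≤ (exp 1 ^ ℓ * ℓ !) * a.descFactorial ℓ := by gcongr
    _ = a.descFactorial ℓ * exp 1 ^ ℓ * ℓ ! := by ring

end Estimates

theorem skew_dim_lower_wide_general (n k st h ℓ : ℕ) (hk1 : 1 ≤ k) (hkn : k ≤ n)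
    (hns : n = st * h) (hkl : k = ℓ * h)
    (hst : Real.sqrt (n : ℝ) ≤ (st : ℝ)) :
    (2 * Real.exp 1)⁻¹ ^ k * ((maxHook (rect st h) : ℝ) / (n : ℝ)) ^ k ≤
      (skewSYT (rect ℓ h) (rect st h) : ℝ) / (dim (rect st h) : ℝ) := by
  have hh : 0 < h := Nat.pos_of_ne_zero fun h0 => by simp [h0] at hkl; omega
  have hℓst : ℓ ≤ st := Nat.le_of_mul_le_mul_right (hkl ▸ hns ▸ hkn) hh
  have hst0 : 0 < st := by nlinarith
  have hhst : h ≤ st := by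
    have : ((st * h : ℕ) : ℝ) ≤ (st * st : ℕ) := by
      rw [← hns]
      push_cast
      nlinarith [(Real.sqrt_le_left (Nat.cast_nonneg st)).mp hst]
    exact Nat.le_of_mul_le_mul_left (by exact_mod_cast this) hst0
  have hhook : (maxHook (rect st h) : ℝ) ≤ 2 * st := by
    rw [maxHook_rect hst0 hh]
    exact_mod_cast (show st + h - 1 ≤ 2 * st by omega)
  rw [skewSYT_rect_div_dim_rect hℓst, ← hns, ← hkl]
  calc (2 * Real.exp 1)⁻¹ ^ k * ((maxHook (rect st h) : ℝ) / n) ^ k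
      ≤ (((st : ℝ) / Real.exp 1) ^ ℓ) ^ h / (n : ℝ) ^ k := by
        rw [← pow_mul, ← hkl, ← div_pow, ← mul_pow]
        gcongr
        calc (2 * Real.exp 1)⁻¹ * ((maxHook (rect st h) : ℝ) / n)
            = (maxHook (rect st h) / 2) / Real.exp 1 / n := by ring
          _ ≤ st / Real.exp 1 / n := by gcongr; linarith
    _ ≤ (∏ j : Fin h, ((st + j).descFactorial ℓ : ℝ)) / n.descFactorial k := by
        rw [← Fin.prod_const]
        gcongr with j
        · exact_mod_cast Nat.descFactorial_pos.mpr (by omega)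
        · exact (div_exp_one_pow_le_descFactorial hℓst).trans
            (by exact_mod_cast Nat.descFactorial_le ℓ (Nat.le_add_right st j))
        · exact_mod_cast Nat.descFactorial_le_pow n k

/-- sharpness example, wide rectangles: `λ = [s̃^h]`, `μ = [ℓ^h]`. -/
theorem skew_dim_lower_wide (n k st h ℓ : ℕ) (hn : 1 ≤ n) (hk1 : 1 ≤ k) (hkn : k ≤ n)
    (hh : 1 ≤ h) (hℓ : 1 ≤ ℓ) (hns : n = st * h) (hkl : k = ℓ * h)
    (hst : Real.sqrt (n : ℝ) ≤ (st : ℝ)) (hhk : (h : ℝ) ≤ Real.sqrt (k : ℝ)) :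
    (2 * Real.exp 1)⁻¹ ^ k * ((maxHook (rect st h) : ℝ) / (n : ℝ)) ^ k ≤
      (skewSYT (rect ℓ h) (rect st h) : ℝ) / (dim (rect st h) : ℝ) :=
  skew_dim_lower_wide_general n k st h ℓ hk1 hkn hns hkl hst

end ThickHookPaper
end
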